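/- arXiv:math/0411470 — 7 statements merged into one kernel-verified Lean document; each statement's English description precedes it below -/
import Mathlib

section
/- Let M be a Garside monoid, let Δ₁ and Δ₂ be Garside elements of M, and let d be a greatest common lower bound of Δ₁ and Δ₂ with respect to ≤_L. Then d is also a greatest common lower bound of Δ₁ and Δ₂ with respect to ≤_R, and d is a Garside element of M. -/
/-- `a` left-divides `b` in the monoid `M`. -/
def dvdL {M : Type*} [Monoid M] (a b : M) : Prop := ∃ c, a * c = b

/-- `a` right-divides `b` in the monoid `M`. -/
def dvdR {M : Type*} [Monoid M] (a b : M) : Prop := ∃ c, c * a = b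

/-- `L(a)`, the set of left divisors of `a`. -/
def Lset {M : Type*} [Monoid M] (a : M) : Set M := {x | dvdL x a}

/-- `R(a)`, the set of right divisors of `a`. -/
def Rset {M : Type*} [Monoid M] (a : M) : Set M := {x | dvdR x a}

/-- `a` is an atom: `a ≠ 1` and `a = b * c` implies `b = 1` or `c = 1`. -/
def IsAtomElt {M : Type*} [Monoid M] (a : M) : Prop :=
  a ≠ 1 ∧ ∀ b c : M, a = b * c → b = 1 ∨ c = 1

/-- `M` is atomic: every element is a finite product of atoms, and the lengths of
expressions of a given element as products of atoms are bounded above. -/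
def Atomic (M : Type*) [Monoid M] : Prop :=
  (∀ a : M, ∃ l : List M, (∀ x ∈ l, IsAtomElt x) ∧ l.prod = a) ∧
  (∀ a : M, ∃ N : ℕ, ∀ l : List M, (∀ x ∈ l, IsAtomElt x) → l.prod = a → l.length ≤ N)

/-- `Δ` is a Garside element: `L(Δ) = R(Δ)` and `L(Δ)` generates `M`. -/
def IsGarsideElt {M : Type*} [Monoid M] (Δ : M) : Prop :=
  Lset Δ = Rset Δ ∧ Submonoid.closure (Lset Δ) = ⊤

/-- `d` is a greatest common lower bound of `a` and `b` with respect to `≤_L`. -/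
def IsGlbL {M : Type*} [Monoid M] (a b d : M) : Prop :=
  dvdL d a ∧ dvdL d b ∧ ∀ c : M, dvdL c a → dvdL c b → dvdL c d

/-- `d` is a least common upper bound of `a` and `b` with respect to `≤_L`. -/
def IsLubL {M : Type*} [Monoid M] (a b d : M) : Prop :=
  dvdL a d ∧ dvdL b d ∧ ∀ c : M, dvdL a c → dvdL b c → dvdL d c

/-- `d` is a greatest common lower bound of `a` and `b` with respect to `≤_R`. -/
def IsGlbR {M : Type*} [Monoid M] (a b d : M) : Prop :=
  dvdR d a ∧ dvdR d b ∧ ∀ c : M, dvdR c a → dvdR c b → dvdR c d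

/-- `d` is a least common upper bound of `a` and `b` with respect to `≤_R`. -/
def IsLubR {M : Type*} [Monoid M] (a b d : M) : Prop :=
  dvdR a d ∧ dvdR b d ∧ ∀ c : M, dvdR a c → dvdR b c → dvdR d c

/-- `M` is a Garside monoid: finitely generated, left and right cancellative, atomic,
`≤_L`- and `≤_R`-lattice conditions, and it possesses a Garside element. -/
def IsGarsideMonoid (M : Type*) [Monoid M] : Prop :=
  (∃ S : Set M, S.Finite ∧ Submonoid.closure S = ⊤) ∧
  (∀ a b c : M, a * b = a * c → b = c) ∧
  (∀ a b c : M, b * a = c * a → b = c) ∧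
  Atomic M ∧
  (∀ a b : M, ∃ d, IsGlbL a b d) ∧
  (∀ a b : M, ∃ d, IsLubL a b d) ∧
  (∀ a b : M, ∃ d, IsGlbR a b d) ∧
  (∀ a b : M, ∃ d, IsLubR a b d) ∧
  (∃ Δ : M, IsGarsideElt Δ)

/-!
Writing `d'` for the `≤_R`-gcd of `Δ₁` and `Δ₂`, we get
`L(d) = L(Δ₁) ∩ L(Δ₂) = R(Δ₁) ∩ R(Δ₂) = R(d')`. Hence `d = b d'` and `d' = d a`, so `b d a = d`;
iterating, `bⁿ d aⁿ = d`, which contradicts the bound on factorization lengths of `d` unless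
`b = a = 1`. Thus `d = d'` and `L(d) = R(d)`. An atom in the monoid generated by `L(Δ)` lies in
`L(Δ)`, so every atom left-divides both `Δᵢ`, hence `d`; since atoms generate `M`, so does `L(d)`.
-/

lemma dvdL_trans {M : Type*} [Monoid M] {a b c : M} (hab : dvdL a b) (hbc : dvdL b c) :
    dvdL a c := by
  obtain ⟨u, rfl⟩ := hab
  obtain ⟨v, rfl⟩ := hbc
  exact ⟨u * v, (mul_assoc _ _ _).symm⟩

lemma dvdR_trans {M : Type*} [Monoid M] {a b c : M} (hab : dvdR a b) (hbc : dvdR b c) :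
    dvdR a c := by
  obtain ⟨u, rfl⟩ := hab
  obtain ⟨v, rfl⟩ := hbc
  exact ⟨v * u, mul_assoc _ _ _⟩

lemma isGlbL_iff_Lset_eq_inter {M : Type*} [Monoid M] {a b d : M} :
    IsGlbL a b d ↔ Lset d = Lset a ∩ Lset b := by
  constructor
  · rintro ⟨hda, hdb, hmax⟩
    ext x
    exact ⟨fun hx => ⟨dvdL_trans hx hda, dvdL_trans hx hdb⟩, fun ⟨hxa, hxb⟩ => hmax x hxa hxb⟩
  · intro h
    have hd : d ∈ Lset a ∩ Lset b := h ▸ ⟨1, mul_one d⟩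
    exact ⟨hd.1, hd.2, fun c hca hcb => (h ▸ ⟨hca, hcb⟩ : c ∈ Lset d)⟩

lemma isGlbR_iff_Rset_eq_inter {M : Type*} [Monoid M] {a b d : M} :
    IsGlbR a b d ↔ Rset d = Rset a ∩ Rset b := by
  constructor
  · rintro ⟨hda, hdb, hmax⟩
    ext x
    exact ⟨fun hx => ⟨dvdR_trans hx hda, dvdR_trans hx hdb⟩, fun ⟨hxa, hxb⟩ => hmax x hxa hxb⟩
  · intro h
    have hd : d ∈ Rset a ∩ Rset b := h ▸ ⟨1, one_mul d⟩
    exact ⟨hd.1, hd.2, fun c hca hcb => (h ▸ ⟨hca, hcb⟩ : c ∈ Rset d)⟩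

lemma pow_mul_mul_pow_eq_self {M : Type*} [Monoid M] {b x a : M} (h : b * x * a = x) (n : ℕ) :
    b ^ n * x * a ^ n = x := by
  induction n with
  | zero => simp
  | succ n ih =>
    calc b ^ (n + 1) * x * a ^ (n + 1) = b * (b ^ n * x * a ^ n) * a := by
          simp only [pow_succ' b, pow_succ a, mul_assoc]
      _ = x := by rw [ih, h]

lemma Atomic.eq_one_of_mul_mul_eq_self {M : Type*} [Monoid M] (hat : Atomic M) {b x a : M}
    (h : b * x * a = x) : b = 1 ∧ a = 1 := by
  obtain ⟨hfac, hbdd⟩ := hat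
  obtain ⟨N, hN⟩ := hbdd x
  obtain ⟨lb, hlb, rfl⟩ := hfac b
  obtain ⟨la, hla, rfl⟩ := hfac a
  obtain ⟨lx, hlx, rfl⟩ := hfac x
  set l := (List.replicate (N + 1) lb).flatten ++ lx ++ (List.replicate (N + 1) la).flatten
  have hl_atoms : ∀ y ∈ l, IsAtomElt y := by
    simp only [l, List.mem_append, List.mem_flatten, List.mem_replicate]
    rintro y ((⟨_, ⟨-, rfl⟩, hy⟩ | hy) | ⟨_, ⟨-, rfl⟩, hy⟩)
    exacts [hlb y hy, hlx y hy, hla y hy]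
  have hl_prod : l.prod = lx.prod := by
    simpa only [l, List.prod_append, List.prod_flatten, List.map_replicate, List.prod_replicate]
      using pow_mul_mul_pow_eq_self h (N + 1)
  have hl_len : l.length = (N + 1) * lb.length + lx.length + (N + 1) * la.length := by
    simp only [l, List.length_append, List.length_flatten, List.map_replicate,
      List.sum_replicate, smul_eq_mul]
  have hle := hN l hl_atoms hl_prod
  have hlb_nil : lb = [] := List.eq_nil_of_length_eq_zero (by nlinarith)
  have hla_nil : la = [] := List.eq_nil_of_length_eq_zero (by nlinarith)
  simp [hlb_nil, hla_nil]

lemma Atomic.eq_of_Lset_eq_Rset {M : Type*} [Monoid M] (hat : Atomic M) {x y : M}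
    (h : Lset x = Rset y) : x = y := by
  obtain ⟨b, hb⟩ : x ∈ Rset y := h ▸ ⟨1, mul_one x⟩
  obtain ⟨a, ha⟩ : y ∈ Lset x := h.symm ▸ ⟨1, one_mul y⟩
  obtain ⟨hb1, -⟩ := hat.eq_one_of_mul_mul_eq_self (show b * x * a = x by rw [hb, ha])
  rw [← hb, hb1, one_mul]

lemma Atomic.closure_eq_top {M : Type*} [Monoid M] (hat : Atomic M) {S : Set M}
    (hS : ∀ a, IsAtomElt a → a ∈ S) : Submonoid.closure S = ⊤ := by
  refine eq_top_iff.mpr fun x _ => ?_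
  obtain ⟨l, hl, rfl⟩ := hat.1 x
  exact Submonoid.list_prod_mem _ fun y hy => Submonoid.subset_closure (hS y (hl y hy))

lemma IsAtomElt.mem_of_list_prod_eq {M : Type*} [Monoid M] {a : M} (ha : IsAtomElt a) :
    ∀ l : List M, l.prod = a → a ∈ l
  | [], h => absurd h.symm ha.1
  | x :: l, h => by
    rw [List.prod_cons] at h
    rcases ha.2 x l.prod h.symm with rfl | hl
    · exact List.mem_cons_of_mem _ (ha.mem_of_list_prod_eq l (by simpa using h))
    · simp [← h, hl]

lemma IsAtomElt.mem_of_mem_closure {M : Type*} [Monoid M] {a : M} {S : Set M}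
    (ha : IsAtomElt a) (hS : a ∈ Submonoid.closure S) : a ∈ S := by
  obtain ⟨l, hl, hprod⟩ := Submonoid.exists_list_of_mem_closure hS
  exact hl a (ha.mem_of_list_prod_eq l hprod)

lemma IsGarsideElt.dvdL_of_isAtomElt {M : Type*} [Monoid M] {Δ a : M} (hΔ : IsGarsideElt Δ)
    (ha : IsAtomElt a) : dvdL a Δ :=
  ha.mem_of_mem_closure (S := Lset Δ) (hΔ.2 ▸ Submonoid.mem_top a)

/-- **Lemma 3.2.** If `Δ₁` and `Δ₂` are Garside elements of a Garside monoid `M`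
and `d` is a greatest common lower bound of `Δ₁` and `Δ₂` with respect to `≤_L`,
then `d` is also a greatest common lower bound with respect to `≤_R`, and `d` is
a Garside element of `M`. -/
theorem garside_glb_of_garside_elts {M : Type*} [Monoid M] (hM : IsGarsideMonoid M)
    (Δ₁ Δ₂ d : M) (h₁ : IsGarsideElt Δ₁) (h₂ : IsGarsideElt Δ₂)
    (hd : IsGlbL Δ₁ Δ₂ d) :
    IsGlbR Δ₁ Δ₂ d ∧ IsGarsideElt d := by
  obtain ⟨-, -, -, hat, -, -, hglbR, -, -⟩ := hM
  obtain ⟨d', hd'⟩ := hglbR Δ₁ Δ₂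
  have hLR : Lset d = Rset d' := by
    rw [isGlbL_iff_Lset_eq_inter.mp hd, isGlbR_iff_Rset_eq_inter.mp hd', h₁.1, h₂.1]
  obtain rfl := hat.eq_of_Lset_eq_Rset hLR
  exact ⟨hd', hLR, hat.closure_eq_top fun a ha =>
    hd.2.2 a (h₁.dvdL_of_isAtomElt ha) (h₂.dvdL_of_isAtomElt ha)⟩
end

section
/- Let a₁, a₂ ∈ G⁺ and b₁, b₂ ∈ H⁺. Then: (i) (a₁,b₁) ≤_L (a₂,b₂) if and only if a₁ ≤_L a₂ in the monoid G⁺ and b₁^{a₁⁻¹} ≤_L b₂^{a₂⁻¹} in the monoid H⁺; (ii) (a₁,b₁) ≤_R (a₂,b₂) if and only if a₁ ≤_R a₂ in G⁺ and b₁ ≤_R b₂ in H⁺. -/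
/-- Group-level left divisibility: `a ≤_L b` iff `a⁻¹ * b` is positive. -/
def gdvdL {G : Type*} [Group G] (P : Submonoid G) (a b : G) : Prop := a⁻¹ * b ∈ P

/-- Group-level right divisibility: `a ≤_R b` iff `b * a⁻¹` is positive. -/
def gdvdR {G : Type*} [Group G] (P : Submonoid G) (a b : G) : Prop := b * a⁻¹ ∈ P

/-- `G` is a Garside group with positive monoid `P` and chosen Garside element `Δ`:
`P` is a Garside monoid, every element of `G` is a fraction `a * b⁻¹` of positive
elements, and `Δ` is a Garside element of `P`. -/
def IsGarsideGroup {G : Type*} [Group G] (P : Submonoid G) (Δ : G) : Prop :=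
  IsGarsideMonoid P ∧
  (∀ g : G, ∃ a b : P, g = (a : G) * (b : G)⁻¹) ∧
  ∃ hΔ : Δ ∈ P, IsGarsideElt (⟨Δ, hΔ⟩ : P)

/-- A right action of the group `G` on the group `H` by group automorphisms,
written `h ↦ ρ.act x h` (the paper's `h^x`). -/
structure RightAction (G H : Type*) [Group G] [Group H] where
  act : G → H → H
  act_mul : ∀ (x : G) (h₁ h₂ : H), act x (h₁ * h₂) = act x h₁ * act x h₂
  act_one : ∀ h : H, act 1 h = h
  act_comp : ∀ (x y : G) (h : H), act (x * y) h = act y (act x h)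

namespace RightAction

variable {G H : Type*} [Group G] [Group H]

lemma act_one' (ρ : RightAction G H) (x : G) : ρ.act x 1 = 1 := by
  have h := ρ.act_mul x 1 1
  rw [one_mul] at h
  exact left_eq_mul.mp h

end RightAction

/-- The semidirect product `G ⋉ H` with multiplication
`(x₁,h₁)·(x₂,h₂) = (x₁·x₂, h₁^{x₂}·h₂)`. -/
structure SDP {G H : Type*} [Group G] [Group H] (ρ : RightAction G H) where
  g : G
  h : H

namespace SDP

variable {G H : Type*} [Group G] [Group H] {ρ : RightAction G H}

protected def gmul (p q : SDP ρ) : SDP ρ := ⟨p.g * q.g, ρ.act q.g p.h * q.h⟩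

protected def gone : SDP ρ := ⟨1, 1⟩

protected def ginv (p : SDP ρ) : SDP ρ := ⟨p.g⁻¹, ρ.act p.g⁻¹ p.h⁻¹⟩

protected lemma gmul_assoc (p q r : SDP ρ) :
    SDP.gmul (SDP.gmul p q) r = SDP.gmul p (SDP.gmul q r) := by
  simp only [SDP.gmul, mk.injEq]
  exact ⟨mul_assoc _ _ _, by rw [ρ.act_mul, ρ.act_comp, mul_assoc]⟩

protected lemma gone_mul (p : SDP ρ) : SDP.gmul SDP.gone p = p := by
  simp only [SDP.gmul, SDP.gone]
  simp [RightAction.act_one']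

protected lemma gmul_one (p : SDP ρ) : SDP.gmul p SDP.gone = p := by
  simp only [SDP.gmul, SDP.gone]
  simp [ρ.act_one]

protected lemma ginv_mul_cancel (p : SDP ρ) : SDP.gmul (SDP.ginv p) p = SDP.gone := by
  simp only [SDP.gmul, SDP.ginv, SDP.gone, mk.injEq]
  rw [← ρ.act_comp]
  simp [ρ.act_one]

/-- The group structure on the semidirect product `G ⋉ H`. -/
instance : Group (SDP ρ) where
  mul := SDP.gmul
  one := SDP.gone
  inv := SDP.ginv
  mul_assoc := SDP.gmul_assoc
  one_mul := SDP.gone_mul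
  mul_one := SDP.gmul_one
  inv_mul_cancel := SDP.ginv_mul_cancel

@[simp] lemma mul_g (p q : SDP ρ) : (p * q).g = p.g * q.g := rfl
@[simp] lemma mul_h (p q : SDP ρ) : (p * q).h = ρ.act q.g p.h * q.h := rfl
@[simp] lemma one_g : (1 : SDP ρ).g = 1 := rfl
@[simp] lemma one_h : (1 : SDP ρ).h = 1 := rfl

end SDP

/-- Membership in the submonoid `G⁺ ⋉ H⁺` of `G ⋉ H`. -/
def SDPpos {G H : Type*} [Group G] [Group H] {ρ : RightAction G H}
    (PG : Submonoid G) (PH : Submonoid H) (p : SDP ρ) : Prop :=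
  p.g ∈ PG ∧ p.h ∈ PH

/-- `p ≤_L q` in `G ⋉ H`: `p · u = q` for some `u ∈ G⁺ ⋉ H⁺`. -/
def SDPdvdL {G H : Type*} [Group G] [Group H] {ρ : RightAction G H}
    (PG : Submonoid G) (PH : Submonoid H) (p q : SDP ρ) : Prop :=
  ∃ u : SDP ρ, SDPpos PG PH u ∧ p * u = q

/-- `p ≤_R q` in `G ⋉ H`: `u · p = q` for some `u ∈ G⁺ ⋉ H⁺`. -/
def SDPdvdR {G H : Type*} [Group G] [Group H] {ρ : RightAction G H}
    (PG : Submonoid G) (PH : Submonoid H) (p q : SDP ρ) : Prop :=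
  ∃ u : SDP ρ, SDPpos PG PH u ∧ u * p = q

/-!
Since `G ⋉ H` is a group, `p ≤_L q` holds iff `p⁻¹ * q` lies in `G⁺ ⋉ H⁺`, and `p ≤_R q` iff
`q * p⁻¹` does. For `p = (a₁, b₁)`, `q = (a₂, b₂)` these quotients have `G`-components
`a₁⁻¹ a₂` and `a₂ a₁⁻¹`, and `H`-components `((b₁^{a₁⁻¹})⁻¹ b₂^{a₂⁻¹})^{a₂}` and `(b₂ b₁⁻¹)^{a₁⁻¹}`;
the outer twists do not affect positivity because each `h ↦ h^x` is a bijection of `H⁺`.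
-/

namespace RightAction

variable {G H : Type*} [Group G] [Group H] (ρ : RightAction G H)

lemma act_inv (x : G) (h : H) : ρ.act x h⁻¹ = (ρ.act x h)⁻¹ :=
  map_inv (MonoidHom.mk' (ρ.act x) (ρ.act_mul x)) h

lemma act_inv_act (x : G) (h : H) : ρ.act x⁻¹ (ρ.act x h) = h := by
  rw [← ρ.act_comp, mul_inv_cancel, ρ.act_one]

lemma act_act_inv (x : G) (h : H) : ρ.act x (ρ.act x⁻¹ h) = h := by
  simpa only [inv_inv] using ρ.act_inv_act x⁻¹ h

lemma act_injective (x : G) : Function.Injective (ρ.act x) :=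
  Function.LeftInverse.injective (ρ.act_inv_act x)

lemma act_mem_iff {P : Set H} (hP : ∀ x : G, ρ.act x '' P = P) {x : G} {h : H} :
    ρ.act x h ∈ P ↔ h ∈ P := by
  simpa only [hP x] using (ρ.act_injective x).mem_set_image (s := P) (a := h)

end RightAction

namespace SDP

variable {G H : Type*} [Group G] [Group H] {ρ : RightAction G H}

lemma mk_inv_mul_mk (a₁ a₂ : G) (b₁ b₂ : H) :
    (mk a₁ b₁ : SDP ρ)⁻¹ * mk a₂ b₂ =
      mk (a₁⁻¹ * a₂) (ρ.act a₂ ((ρ.act a₁⁻¹ b₁)⁻¹ * ρ.act a₂⁻¹ b₂)) := by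
  rw [ρ.act_mul, ρ.act_act_inv, ← ρ.act_inv]
  rfl

lemma mk_mul_mk_inv (a₁ a₂ : G) (b₁ b₂ : H) :
    (mk a₂ b₂ : SDP ρ) * (mk a₁ b₁)⁻¹ = mk (a₂ * a₁⁻¹) (ρ.act a₁⁻¹ (b₂ * b₁⁻¹)) := by
  rw [ρ.act_mul]
  rfl

end SDP

section Divisibility

variable {G H : Type*} [Group G] [Group H] {ρ : RightAction G H}
  (PG : Submonoid G) (PH : Submonoid H)

lemma SDPdvdL_iff_SDPpos_inv_mul (p q : SDP ρ) : SDPdvdL PG PH p q ↔ SDPpos PG PH (p⁻¹ * q) :=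
  ⟨fun ⟨_, hu, hpu⟩ => by rwa [← hpu, inv_mul_cancel_left],
    fun h => ⟨_, h, mul_inv_cancel_left p q⟩⟩

lemma SDPdvdR_iff_SDPpos_mul_inv (p q : SDP ρ) : SDPdvdR PG PH p q ↔ SDPpos PG PH (q * p⁻¹) :=
  ⟨fun ⟨_, hu, hup⟩ => by rwa [← hup, mul_inv_cancel_right],
    fun h => ⟨_, h, inv_mul_cancel_right q p⟩⟩

end Divisibility

theorem sdp_dvdL_dvdR_iff_general {G H : Type*} [Group G] [Group H] (ρ : RightAction G H)
    (PG : Submonoid G) (PH : Submonoid H)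
    (hact : ∀ x : G, ρ.act x '' (PH : Set H) = (PH : Set H))
    (a₁ a₂ : G) (b₁ b₂ : H) :
    (SDPdvdL PG PH (SDP.mk a₁ b₁ : SDP ρ) (SDP.mk a₂ b₂) ↔
      gdvdL PG a₁ a₂ ∧ gdvdL PH (ρ.act a₁⁻¹ b₁) (ρ.act a₂⁻¹ b₂)) ∧
    (SDPdvdR PG PH (SDP.mk a₁ b₁ : SDP ρ) (SDP.mk a₂ b₂) ↔
      gdvdR PG a₁ a₂ ∧ gdvdR PH b₁ b₂) := by
  constructor
  · rw [SDPdvdL_iff_SDPpos_inv_mul, SDP.mk_inv_mul_mk]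
    exact and_congr_right' (ρ.act_mem_iff hact)
  · rw [SDPdvdR_iff_SDPpos_mul_inv, SDP.mk_mul_mk_inv]
    exact and_congr_right' (ρ.act_mem_iff hact)

/-- **Proposition 4.2 (3),(4).** For `a₁, a₂ ∈ G⁺` and `b₁, b₂ ∈ H⁺`:
`(a₁,b₁) ≤_L (a₂,b₂)` iff `a₁ ≤_L a₂` and `b₁^{a₁⁻¹} ≤_L b₂^{a₂⁻¹}`, and
`(a₁,b₁) ≤_R (a₂,b₂)` iff `a₁ ≤_R a₂` and `b₁ ≤_R b₂`. -/
theorem sdp_dvdL_dvdR_iff {G H : Type*} [Group G] [Group H] (ρ : RightAction G H)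
    (PG : Submonoid G) (PH : Submonoid H) (ΔG : G) (ΔH : H)
    (hG : IsGarsideGroup PG ΔG) (hH : IsGarsideGroup PH ΔH)
    (hact : ∀ x : G, ρ.act x '' (PH : Set H) = (PH : Set H))
    (a₁ a₂ : G) (b₁ b₂ : H)
    (ha₁ : a₁ ∈ PG) (ha₂ : a₂ ∈ PG) (hb₁ : b₁ ∈ PH) (hb₂ : b₂ ∈ PH) :
    (SDPdvdL PG PH (SDP.mk a₁ b₁ : SDP ρ) (SDP.mk a₂ b₂) ↔
      gdvdL PG a₁ a₂ ∧ gdvdL PH (ρ.act a₁⁻¹ b₁) (ρ.act a₂⁻¹ b₂)) ∧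
    (SDPdvdR PG PH (SDP.mk a₁ b₁ : SDP ρ) (SDP.mk a₂ b₂) ↔
      gdvdR PG a₁ a₂ ∧ gdvdR PH b₁ b₂) :=
  sdp_dvdL_dvdR_iff_general ρ PG PH hact a₁ a₂ b₁ b₂
end

section
/- Suppose moreover that Δ_H^x = Δ_H for all x ∈ G. Then the monoid P = G⁺ ⋉ H⁺ is a Garside monoid with Garside element (Δ_G, Δ_H); explicitly: P is finitely generated; P is atomic; P is left- and right-cancellative; any two elements of P have a greatest common lower bound and a least common upper bound with respect to ≤_L, and likewise with respect to ≤_R; the set of left divisors of (Δ_G, Δ_H) in P equals its set of right divisors in P, equals {(a,b) : a ∈ G⁺, b ∈ H⁺, a ≤_L Δ_G, b ≤_L Δ_H}, and generates P. Moreover, every element of G ⋉ H can be written as p·q⁻¹ with p, q ∈ P, so G ⋉ H is the group of fractions of P and is a Garside group with positive monoid P. -/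
/-!
Every positive element factors as `(a, 1) · (1, b)` with `a ∈ G⁺` and `b ∈ H⁺`, so an atom of
`G⁺ ⋉ H⁺` is an atom of one of the two factors; as the action permutes the atoms of `H⁺`,
factorizations into atoms and their lengths are controlled by those in `G⁺` and `H⁺`.
Right divisibility is componentwise, `(a, b) ≤_R (c, d) ↔ a ≤_R c ∧ b ≤_R d`, and left
divisibility is componentwise in the twisted coordinates `(a, b^{a⁻¹})`: the `H`-part of
`(a, b)⁻¹ (c, d)`, moved by `c⁻¹`, is `(b^{a⁻¹})⁻¹ d^{c⁻¹}`. Hence gcds and lcms on both sides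
are computed in `G⁺ × H⁺`. Since `Δ_H` is fixed by `G`, `(a, b) ≤_L (Δ_G, Δ_H)` iff
`a ≤_L Δ_G` and `b ≤_L Δ_H`, which is also the condition for right divisibility.
-/

section Divisibility

variable {K : Type*} [Group K] {Q : Submonoid K}

lemma dvdL_iff_gdvdL (x y : Q) : dvdL x y ↔ gdvdL Q (x : K) y := by
  constructor
  · rintro ⟨c, rfl⟩
    simp [gdvdL]
  · exact fun h => ⟨⟨_, h⟩, Subtype.ext (mul_inv_cancel_left _ _)⟩

lemma dvdR_iff_gdvdR (x y : Q) : dvdR x y ↔ gdvdR Q (x : K) y := by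
  constructor
  · rintro ⟨c, rfl⟩
    simp [gdvdR]
  · exact fun h => ⟨⟨_, h⟩, Subtype.ext (inv_mul_cancel_right _ _)⟩

lemma gdvdL_iff_gdvdR_of_lset_eq_rset {Δ : Q} (h : Lset Δ = Rset Δ) (x : Q) :
    gdvdL Q (x : K) Δ ↔ gdvdR Q (x : K) Δ := by
  rw [← dvdL_iff_gdvdL, ← dvdR_iff_gdvdR]
  exact Set.ext_iff.mp h x

end Divisibility

section Meets

variable {α β γ : Type*}

-- Joins are meets for `flip r`.
def IsMeet (r : α → α → Prop) (a b d : α) : Prop :=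
  r d a ∧ r d b ∧ ∀ c, r c a → r c b → r c d

lemma exists_isMeet_of_surjective {r : α → α → Prop} {s : β → β → Prop} {t : γ → γ → Prop}
    {f : α → β × γ} (hf : Function.Surjective f)
    (hr : ∀ x y, r x y ↔ s (f x).1 (f y).1 ∧ t (f x).2 (f y).2)
    (hs : ∀ a b, ∃ d, IsMeet s a b d) (ht : ∀ a b, ∃ d, IsMeet t a b d) (x y : α) :
    ∃ d, IsMeet r x y d := by
  obtain ⟨d₁, hd₁x, hd₁y, hd₁⟩ := hs (f x).1 (f y).1
  obtain ⟨d₂, hd₂x, hd₂y, hd₂⟩ := ht (f x).2 (f y).2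
  obtain ⟨d, hd⟩ := hf (d₁, d₂)
  refine ⟨d, ?_, ?_, fun c hcx hcy => ?_⟩
  · rw [hr, hd]; exact ⟨hd₁x, hd₂x⟩
  · rw [hr, hd]; exact ⟨hd₁y, hd₂y⟩
  · rw [hr] at hcx hcy ⊢
    rw [hd]
    exact ⟨hd₁ _ hcx.1 hcy.1, hd₂ _ hcx.2 hcy.2⟩

end Meets

section Atoms

variable {M N : Type*} [Monoid M] [Monoid N]

lemma IsAtomElt.of_map {f : M →* N} (hf : Function.Injective f) {a : M}
    (ha : IsAtomElt (f a)) : IsAtomElt a := by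
  refine ⟨fun h => ha.1 (by rw [h, map_one]), fun b c hbc => ?_⟩
  rcases ha.2 (f b) (f c) (by rw [hbc, map_mul]) with h | h
  · exact .inl ((map_eq_one_iff f hf).mp h)
  · exact .inr ((map_eq_one_iff f hf).mp h)

lemma IsAtomElt.map {f : M →* N} (hf : Function.Injective f) {a : M} (ha : IsAtomElt a)
    (hfac : ∀ q r, f a = q * r → q ∈ MonoidHom.mrange f ∧ r ∈ MonoidHom.mrange f) :
    IsAtomElt (f a) := by
  refine ⟨fun h => ha.1 ((map_eq_one_iff f hf).mp h), fun q r hqr => ?_⟩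
  obtain ⟨⟨b, rfl⟩, ⟨c, rfl⟩⟩ := hfac q r hqr
  rcases ha.2 b c (hf (by rw [hqr, map_mul])) with rfl | rfl
  · exact .inl (map_one f)
  · exact .inr (map_one f)

lemma IsAtomElt.map_mulEquiv (e : M ≃* N) {a : M} (ha : IsAtomElt a) : IsAtomElt (e a) :=
  IsAtomElt.of_map (f := e.symm.toMonoidHom) e.symm.injective (by simpa using ha)

lemma Atomic.mul_eq_one_iff (hM : Atomic M) {u v : M} : u * v = 1 ↔ u = 1 ∧ v = 1 := by
  refine ⟨fun huv => ?_, fun ⟨hu, hv⟩ => by rw [hu, hv, one_mul]⟩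
  suffices hu : u = 1 by rw [hu, one_mul] at huv; exact ⟨hu, huv⟩
  by_contra hu
  obtain ⟨N, hN⟩ := hM.2 1
  obtain ⟨lu, hlu, rfl⟩ := hM.1 u
  obtain ⟨lv, hlv, rfl⟩ := hM.1 v
  have hlu_ne : lu ≠ [] := by rintro rfl; exact hu List.prod_nil
  -- `(u * v) ^ (N + 1) = 1` has a factorization into more than `N` atoms.
  let l := (List.replicate (N + 1) (lu ++ lv)).flatten
  have hl : l.length ≤ N :=
    hN l (by simpa [l, or_imp, forall_and] using ⟨hlu, hlv⟩) (by simp [l, List.prod_flatten, huv])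
  have := List.length_pos_iff.mpr hlu_ne
  simp only [l, List.length_flatten, List.map_replicate, List.sum_replicate, List.length_append,
    smul_eq_mul] at hl
  nlinarith

end Atoms

namespace RightAction

variable {G H : Type*} [Group G] [Group H] (ρ : RightAction G H)

variable {ρ} {PH : Submonoid H}

lemma act_mem_iff_s6 (hact : ∀ x : G, ∀ b ∈ PH, ρ.act x b ∈ PH) (x : G) (b : H) :
    ρ.act x b ∈ PH ↔ b ∈ PH :=
  ⟨fun hb => ρ.act_inv_act x b ▸ hact x⁻¹ _ hb, hact x b⟩

def restrictAct (hact : ∀ x : G, ∀ b ∈ PH, ρ.act x b ∈ PH) (x : G) : PH ≃* PH where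
  toFun b := ⟨ρ.act x b, hact x b b.2⟩
  invFun b := ⟨ρ.act x⁻¹ b, hact x⁻¹ b b.2⟩
  left_inv b := Subtype.ext (ρ.act_inv_act x b)
  right_inv b := Subtype.ext (by simpa using ρ.act_inv_act x⁻¹ b)
  map_mul' a b := Subtype.ext (ρ.act_mul x a b)

lemma gdvdL_act_iff_of_act_eq (hact : ∀ x : G, ∀ b ∈ PH, ρ.act x b ∈ PH) {x : G} {Δ : H}
    (hx : ρ.act x Δ = Δ) (b : H) : gdvdL PH (ρ.act x b) Δ ↔ gdvdL PH b Δ := by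
  rw [gdvdL, gdvdL, ← act_mem_iff_s6 hact x (b⁻¹ * Δ), ρ.act_mul, ρ.act_inv, hx]

end RightAction

namespace SDP

variable {G H : Type*} [Group G] [Group H] {ρ : RightAction G H}

@[simp] lemma mk_mul_mk (a c : G) (b d : H) :
    (mk a b : SDP ρ) * mk c d = mk (a * c) (ρ.act c b * d) := rfl

@[simp] lemma inv_g (p : SDP ρ) : p⁻¹.g = p.g⁻¹ := rfl

@[simp] lemma inv_h (p : SDP ρ) : p⁻¹.h = ρ.act p.g⁻¹ p.h⁻¹ := rfl

variable (PG : Submonoid G) {PH : Submonoid H}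

def positive (hact : ∀ x : G, ∀ b ∈ PH, ρ.act x b ∈ PH) : Submonoid (SDP ρ) where
  carrier := {p | p.g ∈ PG ∧ p.h ∈ PH}
  mul_mem' hp hq := ⟨PG.mul_mem hp.1 hq.1, PH.mul_mem (hact _ _ hp.2) hq.2⟩
  one_mem' := ⟨PG.one_mem, PH.one_mem⟩

variable {PG} (hact : ∀ x : G, ∀ b ∈ PH, ρ.act x b ∈ PH)

lemma gdvdL_positive_iff {p q : SDP ρ} :
    gdvdL (positive PG hact) p q ↔
      gdvdL PG p.g q.g ∧ gdvdL PH (ρ.act p.g⁻¹ p.h) (ρ.act q.g⁻¹ q.h) := by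
  refine and_congr Iff.rfl ?_
  rw [← RightAction.act_mem_iff_s6 hact q.g⁻¹]
  simp [gdvdL, ρ.act_mul, ρ.act_inv_act, ρ.act_inv]

lemma gdvdR_positive_iff {p q : SDP ρ} :
    gdvdR (positive PG hact) p q ↔ gdvdR PG p.g q.g ∧ gdvdR PH p.h q.h := by
  refine and_congr Iff.rfl ?_
  change ρ.act p.g⁻¹ q.h * ρ.act p.g⁻¹ p.h⁻¹ ∈ PH ↔ _
  rw [← ρ.act_mul, RightAction.act_mem_iff_s6 hact]
  rfl

variable (PG) in
def inl : PG →* positive PG hact where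
  toFun a := ⟨mk a 1, a.2, PH.one_mem⟩
  map_one' := rfl
  map_mul' a b := Subtype.ext (by simp [RightAction.act_one'])

variable (PG) in
def inr : PH →* positive PG hact where
  toFun b := ⟨mk 1 b, PG.one_mem, b.2⟩
  map_one' := rfl
  map_mul' a b := Subtype.ext (by simp [ρ.act_one])

@[simp] lemma coe_inl (a : PG) : (inl PG hact a : SDP ρ) = mk (a : G) 1 := rfl

@[simp] lemma coe_inr (b : PH) : (inr PG hact b : SDP ρ) = mk 1 (b : H) := rfl

variable (PG) in
lemma inl_injective : Function.Injective (inl PG hact) := fun _ _ h =>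
  Subtype.ext (congrArg (fun p : positive PG hact => p.1.g) h)

variable (PG) in
lemma inr_injective : Function.Injective (inr PG hact) := fun _ _ h =>
  Subtype.ext (congrArg (fun p : positive PG hact => p.1.h) h)

lemma mem_mrange_inl {p : positive PG hact} :
    p ∈ MonoidHom.mrange (inl PG hact) ↔ p.1.h = 1 := by
  refine ⟨fun ⟨a, ha⟩ => ha ▸ rfl, fun hp => ⟨⟨p.1.g, p.2.1⟩, Subtype.ext ?_⟩⟩
  change mk p.1.g 1 = p.1
  rw [← hp]

lemma mem_mrange_inr {p : positive PG hact} :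
    p ∈ MonoidHom.mrange (inr PG hact) ↔ p.1.g = 1 := by
  refine ⟨fun ⟨a, ha⟩ => ha ▸ rfl, fun hp => ⟨⟨p.1.h, p.2.2⟩, Subtype.ext ?_⟩⟩
  change mk 1 p.1.h = p.1
  rw [← hp]

lemma inl_mul_inr (p : positive PG hact) :
    inl PG hact ⟨p.1.g, p.2.1⟩ * inr PG hact ⟨p.1.h, p.2.2⟩ = p :=
  Subtype.ext (by simp [ρ.act_one])

lemma isAtomElt_inl (hH : Atomic PH) {a : PG} (ha : IsAtomElt a) :
    IsAtomElt (inl PG hact a) := by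
  refine IsAtomElt.map (inl_injective PG hact) ha fun q r hqr => ?_
  have hh : ρ.act r.1.g q.1.h * r.1.h = 1 := (congrArg (fun p => p.1.h) hqr).symm
  obtain ⟨hq, hr⟩ := hH.mul_eq_one_iff (u := ⟨_, hact _ _ q.2.2⟩) (v := ⟨_, r.2.2⟩) |>.mp
    (Subtype.ext hh)
  rw [mem_mrange_inl, mem_mrange_inl]
  exact ⟨ρ.act_injective r.1.g ((congrArg Subtype.val hq).trans (ρ.act_one' _).symm),
    congrArg Subtype.val hr⟩

lemma isAtomElt_inr (hG : Atomic PG) {b : PH} (hb : IsAtomElt b) :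
    IsAtomElt (inr PG hact b) := by
  refine IsAtomElt.map (inr_injective PG hact) hb fun q r hqr => ?_
  have hg : q.1.g * r.1.g = 1 := (congrArg (fun p => p.1.g) hqr).symm
  obtain ⟨hq, hr⟩ := hG.mul_eq_one_iff (u := ⟨_, q.2.1⟩) (v := ⟨_, r.2.1⟩) |>.mp (Subtype.ext hg)
  rw [mem_mrange_inr, mem_mrange_inr]
  exact ⟨congrArg Subtype.val hq, congrArg Subtype.val hr⟩

lemma isAtomElt_cases {p : positive PG hact} (hp : IsAtomElt p) :
    (p.1.h = 1 ∧ IsAtomElt (⟨p.1.g, p.2.1⟩ : PG)) ∨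
      (p.1.g = 1 ∧ IsAtomElt (⟨p.1.h, p.2.2⟩ : PH)) := by
  rcases hp.2 _ _ (inl_mul_inr hact p).symm with h | h
  · have hp' : inr PG hact ⟨p.1.h, p.2.2⟩ = p := by simpa [h] using inl_mul_inr hact p
    refine .inr ⟨congrArg (fun p => p.1.g) h, IsAtomElt.of_map (inr_injective PG hact) ?_⟩
    rwa [hp']
  · have hp' : inl PG hact ⟨p.1.g, p.2.1⟩ = p := by simpa [h] using inl_mul_inr hact p
    refine .inl ⟨congrArg (fun p => p.1.h) h, IsAtomElt.of_map (inl_injective PG hact) ?_⟩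
    rwa [hp']

lemma exists_atom_lists_of_atom_list {l : List (positive PG hact)} (hl : ∀ x ∈ l, IsAtomElt x) :
    ∃ (lG : List PG) (lH : List PH), (∀ a ∈ lG, IsAtomElt a) ∧ (∀ b ∈ lH, IsAtomElt b) ∧
      lG.length + lH.length = l.length ∧ (lG.prod : G) = l.prod.1.g ∧
      (lH.prod : H) = l.prod.1.h := by
  induction l with
  | nil => exact ⟨[], [], by simp, by simp, rfl, rfl, rfl⟩
  | cons x t ih =>
    obtain ⟨lG, lH, hlG, hlH, hlen, hg, hh⟩ := ih fun y hy => hl y (List.mem_cons_of_mem x hy)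
    rcases isAtomElt_cases hact (hl x List.mem_cons_self) with ⟨hxh, hxa⟩ | ⟨hxg, hxa⟩
    · refine ⟨⟨x.1.g, x.2.1⟩ :: lG, lH, List.forall_mem_cons.mpr ⟨hxa, hlG⟩, hlH, ?_, ?_, ?_⟩
      · simp only [List.length_cons]; omega
      · simp [hg]
      · simp [hh, hxh, RightAction.act_one']
    · refine ⟨lG, ρ.restrictAct hact t.prod.1.g ⟨x.1.h, x.2.2⟩ :: lH, hlG,
        List.forall_mem_cons.mpr ⟨IsAtomElt.map_mulEquiv _ hxa, hlH⟩, ?_, ?_, ?_⟩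
      · simp only [List.length_cons]; omega
      · simp [hg, hxg]
      · simp [hh, RightAction.restrictAct]

theorem atomic_positive (hG : Atomic PG) (hH : Atomic PH) : Atomic (positive PG hact) := by
  refine ⟨fun p => ?_, fun p => ?_⟩
  · obtain ⟨lG, hlG, hpG⟩ := hG.1 ⟨p.1.g, p.2.1⟩
    obtain ⟨lH, hlH, hpH⟩ := hH.1 ⟨p.1.h, p.2.2⟩
    refine ⟨lG.map (inl PG hact) ++ lH.map (inr PG hact), ?_, ?_⟩
    · simp only [List.mem_append, List.mem_map]
      rintro _ (⟨a, ha, rfl⟩ | ⟨b, hb, rfl⟩)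
      exacts [isAtomElt_inl hact hH (hlG a ha), isAtomElt_inr hact hG (hlH b hb)]
    · rw [List.prod_append, ← map_list_prod, ← map_list_prod, hpG, hpH, inl_mul_inr]
  · obtain ⟨NG, hNG⟩ := hG.2 ⟨p.1.g, p.2.1⟩
    obtain ⟨NH, hNH⟩ := hH.2 ⟨p.1.h, p.2.2⟩
    refine ⟨NG + NH, fun l hl hlp => ?_⟩
    obtain ⟨lG, lH, hlG, hlH, hlen, hg, hh⟩ := exists_atom_lists_of_atom_list hact hl
    subst hlp
    have := hNG lG hlG (Subtype.ext hg)
    have := hNH lH hlH (Subtype.ext hh)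
    omega

lemma closure_eq_top_of_image_subset {SG : Set PG} {SH : Set PH}
    (hSG : Submonoid.closure SG = ⊤) (hSH : Submonoid.closure SH = ⊤)
    {S : Set (positive PG hact)} (hS : inl PG hact '' SG ∪ inr PG hact '' SH ⊆ S) :
    Submonoid.closure S = ⊤ := by
  have hinl : MonoidHom.mrange (inl PG hact) ≤ Submonoid.closure S := by
    rw [MonoidHom.mrange_eq_map, ← hSG, MonoidHom.map_mclosure]
    exact Submonoid.closure_mono (Set.subset_union_left.trans hS)
  have hinr : MonoidHom.mrange (inr PG hact) ≤ Submonoid.closure S := by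
    rw [MonoidHom.mrange_eq_map, ← hSH, MonoidHom.map_mclosure]
    exact Submonoid.closure_mono (Set.subset_union_right.trans hS)
  refine eq_top_iff.mpr fun p _ => ?_
  rw [← inl_mul_inr hact p]
  exact mul_mem (hinl ⟨_, rfl⟩) (hinr ⟨_, rfl⟩)

variable (PG) in
def coords (p : positive PG hact) : PG × PH := (⟨p.1.g, p.2.1⟩, ⟨p.1.h, p.2.2⟩)

variable (PG) in
def twistedCoords (p : positive PG hact) : PG × PH :=
  (⟨p.1.g, p.2.1⟩, ⟨ρ.act p.1.g⁻¹ p.1.h, hact _ _ p.2.2⟩)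

variable (PG) in
lemma coords_surjective : Function.Surjective (coords PG hact) :=
  fun ab => ⟨⟨mk ab.1 ab.2, ab.1.2, ab.2.2⟩, rfl⟩

variable (PG) in
lemma twistedCoords_surjective : Function.Surjective (twistedCoords PG hact) := fun ab =>
  ⟨⟨mk ab.1 (ρ.act ab.1 ab.2), ab.1.2, hact _ _ ab.2.2⟩,
    Prod.ext rfl (Subtype.ext (ρ.act_inv_act _ _))⟩

lemma dvdR_iff_coords (p q : positive PG hact) :
    dvdR p q ↔ dvdR (coords PG hact p).1 (coords PG hact q).1 ∧
      dvdR (coords PG hact p).2 (coords PG hact q).2 := by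
  simp only [dvdR_iff_gdvdR]
  exact gdvdR_positive_iff hact

lemma dvdL_iff_twistedCoords (p q : positive PG hact) :
    dvdL p q ↔ dvdL (twistedCoords PG hact p).1 (twistedCoords PG hact q).1 ∧
      dvdL (twistedCoords PG hact p).2 (twistedCoords PG hact q).2 := by
  simp only [dvdL_iff_gdvdL]
  exact gdvdL_positive_iff hact

theorem isGarsideMonoid_positive (hG : IsGarsideMonoid PG) (hH : IsGarsideMonoid PH)
    (hΔ : ∃ Δ : positive PG hact, IsGarsideElt Δ) : IsGarsideMonoid (positive PG hact) := by
  obtain ⟨⟨SG, hSGfin, hSG⟩, -, -, hGat, hGglbL, hGlubL, hGglbR, hGlubR, -⟩ := hG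
  obtain ⟨⟨SH, hSHfin, hSH⟩, -, -, hHat, hHglbL, hHlubL, hHglbR, hHlubR, -⟩ := hH
  refine ⟨⟨_, (hSGfin.image _).union (hSHfin.image _),
      closure_eq_top_of_image_subset hact hSG hSH subset_rfl⟩,
    fun _ _ _ => mul_left_cancel, fun _ _ _ => mul_right_cancel, atomic_positive hact hGat hHat,
    exists_isMeet_of_surjective (twistedCoords_surjective PG hact) (dvdL_iff_twistedCoords hact)
      hGglbL hHglbL,
    exists_isMeet_of_surjective (twistedCoords_surjective PG hact)
      (fun p q => dvdL_iff_twistedCoords hact q p) hGlubL hHlubL,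
    exists_isMeet_of_surjective (coords_surjective PG hact) (dvdR_iff_coords hact) hGglbR hHglbR,
    exists_isMeet_of_surjective (coords_surjective PG hact)
      (fun p q => dvdR_iff_coords hact q p) hGlubR hHlubR, hΔ⟩

section GarsideElement

variable {ΔG : G} {ΔH : H} (hΔG : ΔG ∈ PG) (hΔH : ΔH ∈ PH)

lemma lset_mk_eq (hfix : ∀ x : G, ρ.act x ΔH = ΔH) :
    Lset (⟨mk ΔG ΔH, hΔG, hΔH⟩ : positive PG hact) =
      {p : positive PG hact | gdvdL PG (p : SDP ρ).g ΔG ∧ gdvdL PH (p : SDP ρ).h ΔH} := by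
  ext p
  change dvdL p _ ↔ _
  rw [dvdL_iff_gdvdL, gdvdL_positive_iff, hfix]
  exact and_congr Iff.rfl (RightAction.gdvdL_act_iff_of_act_eq hact (hfix _) _)

lemma rset_mk_eq (hGΔ : Lset (⟨ΔG, hΔG⟩ : PG) = Rset ⟨ΔG, hΔG⟩)
    (hHΔ : Lset (⟨ΔH, hΔH⟩ : PH) = Rset ⟨ΔH, hΔH⟩) :
    Rset (⟨mk ΔG ΔH, hΔG, hΔH⟩ : positive PG hact) =
      {p : positive PG hact | gdvdL PG (p : SDP ρ).g ΔG ∧ gdvdL PH (p : SDP ρ).h ΔH} := by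
  ext p
  change dvdR p _ ↔ _
  rw [dvdR_iff_gdvdR, gdvdR_positive_iff]
  exact and_congr (gdvdL_iff_gdvdR_of_lset_eq_rset hGΔ ⟨_, p.2.1⟩).symm
    (gdvdL_iff_gdvdR_of_lset_eq_rset hHΔ ⟨_, p.2.2⟩).symm

theorem isGarsideElt_mk (hfix : ∀ x : G, ρ.act x ΔH = ΔH)
    (hGΔ : IsGarsideElt (⟨ΔG, hΔG⟩ : PG)) (hHΔ : IsGarsideElt (⟨ΔH, hΔH⟩ : PH)) :
    IsGarsideElt (⟨mk ΔG ΔH, hΔG, hΔH⟩ : positive PG hact) := by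
  refine ⟨(lset_mk_eq hact hΔG hΔH hfix).trans (rset_mk_eq hact hΔG hΔH hGΔ.1 hHΔ.1).symm,
    closure_eq_top_of_image_subset hact hGΔ.2 hHΔ.2 ?_⟩
  rw [lset_mk_eq hact hΔG hΔH hfix]
  rintro _ (⟨a, ha, rfl⟩ | ⟨b, hb, rfl⟩)
  · exact ⟨(dvdL_iff_gdvdL _ _).mp ha, by simpa [gdvdL] using hΔH⟩
  · exact ⟨by simpa [gdvdL] using hΔG, (dvdL_iff_gdvdL _ _).mp hb⟩

end GarsideElement

theorem exists_eq_mul_inv_positive (hGfrac : ∀ x : G, ∃ a b : PG, x = (a : G) * (b : G)⁻¹)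
    (hHfrac : ∀ h : H, ∃ a b : PH, h = (a : H) * (b : H)⁻¹) (s : SDP ρ) :
    ∃ p q : positive PG hact, s = (p : SDP ρ) * (q : SDP ρ)⁻¹ := by
  obtain ⟨a₁, a₂, hg⟩ := hGfrac s.g
  obtain ⟨b₁, b₂, hh⟩ := hHfrac (ρ.act a₂ s.h)
  refine ⟨⟨mk a₁ b₁, a₁.2, b₁.2⟩, ⟨mk a₂ b₂, a₂.2, b₂.2⟩, eq_mul_inv_of_mul_eq ?_⟩
  change mk s.g s.h * mk (a₂ : G) (b₂ : H) = mk (a₁ : G) (b₁ : H)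
  rw [mk_mul_mk, hg, hh, inv_mul_cancel_right, inv_mul_cancel_right]

end SDP

/-- **Theorem 4.1.** If `Δ_H` is fixed under the action of `G`, then
`P = G⁺ ⋉ H⁺` is a Garside monoid with Garside element `(Δ_G, Δ_H)`, the set of
simple elements being `{(a,b) : a ≤_L Δ_G, b ≤_L Δ_H}`, and `G ⋉ H` is its group
of fractions, i.e. a Garside group with positive monoid `P`. -/
theorem sdp_isGarsideMonoid {G H : Type*} [Group G] [Group H] (ρ : RightAction G H)
    (PG : Submonoid G) (PH : Submonoid H) (ΔG : G) (ΔH : H)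
    (hG : IsGarsideGroup PG ΔG) (hH : IsGarsideGroup PH ΔH)
    (hact : ∀ x : G, ρ.act x '' (PH : Set H) = (PH : Set H))
    (hfix : ∀ x : G, ρ.act x ΔH = ΔH)
    (hΔG : ΔG ∈ PG) (hΔH : ΔH ∈ PH)
    (P : Submonoid (SDP ρ))
    (hP : ∀ p : SDP ρ, p ∈ P ↔ p.g ∈ PG ∧ p.h ∈ PH) :
    IsGarsideMonoid P ∧
    IsGarsideElt (⟨SDP.mk ΔG ΔH, (hP (SDP.mk ΔG ΔH)).mpr ⟨hΔG, hΔH⟩⟩ : P) ∧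
    Lset (⟨SDP.mk ΔG ΔH, (hP (SDP.mk ΔG ΔH)).mpr ⟨hΔG, hΔH⟩⟩ : P) =
      {p : P | gdvdL PG ((p : SDP ρ)).g ΔG ∧ gdvdL PH ((p : SDP ρ)).h ΔH} ∧
    IsGarsideGroup P (SDP.mk ΔG ΔH) := by
  obtain ⟨hGmon, hGfrac, _, hGΔ⟩ := hG
  obtain ⟨hHmon, hHfrac, _, hHΔ⟩ := hH
  have hact' : ∀ x : G, ∀ b ∈ PH, ρ.act x b ∈ PH := fun x b hb => by
    rw [← SetLike.mem_coe, ← hact x]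
    exact Set.mem_image_of_mem _ hb
  obtain rfl : P = SDP.positive PG hact' := SetLike.ext hP
  have hΔ := SDP.isGarsideElt_mk hact' hΔG hΔH hfix hGΔ hHΔ
  have hPmon := SDP.isGarsideMonoid_positive hact' hGmon hHmon ⟨_, hΔ⟩
  exact ⟨hPmon, hΔ, SDP.lset_mk_eq hact' hΔG hΔH hfix, hPmon,
    SDP.exists_eq_mul_inv_positive hact' hGfrac hHfrac, ⟨hΔG, hΔH⟩, hΔ⟩
end

section
/- Let G be a Garside group with positive monoid G⁺ and Garside element Δ, let n ≥ 1, k ∈ ℤ and g₁, …, gₙ ∈ G. (i) If for each i, rᵢ is the greatest integer with Δ^{rᵢ} ≤_L gᵢ, then min{k, r₁, …, rₙ} is the greatest integer r such that 𝐃^r ≤_L δ^k(g₁,…,gₙ) in G(n). (ii) If for each i, sᵢ is the least integer with gᵢ ≤_L Δ^{sᵢ}, then max{k, s₁, …, sₙ} is the least integer s such that δ^k(g₁,…,gₙ) ≤_L 𝐃^s in G(n). -/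
/-- `G(n) = ℤ ⋉ Gⁿ`: the element `δ^k(g₁,…,gₙ)` is recorded as the pair of `k : ℤ`
and the tuple `v : ZMod n → G` (index `j ∈ {1,…,n}` of the paper corresponds to
`j - 1 : ZMod n`). -/
structure Gn (G : Type*) (n : ℕ) where
  k : ℤ
  v : ZMod n → G

namespace Gn

variable {G : Type*} [Group G] {n : ℕ}

protected def gmul (p q : Gn G n) : Gn G n :=
  ⟨p.k + q.k, fun i => p.v (i - (q.k : ZMod n)) * q.v i⟩

protected def gone : Gn G n := ⟨0, fun _ => 1⟩

protected def ginv (p : Gn G n) : Gn G n :=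
  ⟨-p.k, fun i => (p.v (i + (p.k : ZMod n)))⁻¹⟩

protected lemma gmul_assoc (p q r : Gn G n) :
    Gn.gmul (Gn.gmul p q) r = Gn.gmul p (Gn.gmul q r) := by
  simp only [Gn.gmul, mk.injEq]
  constructor
  · ring
  · funext i
    simp only [Int.cast_add]
    rw [show i - ((q.k : ZMod n) + (r.k : ZMod n)) = i - (r.k : ZMod n) - (q.k : ZMod n) by ring]
    rw [mul_assoc]

protected lemma gone_mul (p : Gn G n) : Gn.gmul Gn.gone p = p := by
  simp only [Gn.gmul, Gn.gone]
  simp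

protected lemma gmul_one (p : Gn G n) : Gn.gmul p Gn.gone = p := by
  simp only [Gn.gmul, Gn.gone]
  simp

protected lemma ginv_mul_cancel (p : Gn G n) : Gn.gmul (Gn.ginv p) p = Gn.gone := by
  simp only [Gn.gmul, Gn.ginv, Gn.gone, mk.injEq]
  constructor
  · ring
  · funext i
    simp

/-- The group structure of `G(n) = ℤ ⋉ Gⁿ`, where `ℤ = ⟨δ⟩` acts on `Gⁿ` by the
cyclic coordinate shift: `δ^k(u) · δ^m(v) = δ^{k+m}(u^{δ^m} · v)`. -/
instance : Group (Gn G n) where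
  mul := Gn.gmul
  one := Gn.gone
  inv := Gn.ginv
  mul_assoc := Gn.gmul_assoc
  one_mul := Gn.gone_mul
  mul_one := Gn.gmul_one
  inv_mul_cancel := Gn.ginv_mul_cancel

@[simp] lemma mul_k (p q : Gn G n) : (p * q).k = p.k + q.k := rfl
@[simp] lemma mul_v (p q : Gn G n) (i : ZMod n) :
    (p * q).v i = p.v (i - (q.k : ZMod n)) * q.v i := rfl
@[simp] lemma one_k : (1 : Gn G n).k = 0 := rfl
@[simp] lemma one_v (i : ZMod n) : (1 : Gn G n).v i = 1 := rfl

end Gn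

/-- The positive monoid `G(n)⁺ = {δ^k(a₁,…,aₙ) : k ≥ 0, aᵢ ∈ G⁺}` of `G(n)`. -/
def GnPos {G : Type*} [Group G] (n : ℕ) (P : Submonoid G) : Submonoid (Gn G n) where
  carrier := {p | 0 ≤ p.k ∧ ∀ i, p.v i ∈ P}
  mul_mem' := by
    rintro p q ⟨hp1, hp2⟩ ⟨hq1, hq2⟩
    refine ⟨?_, fun i => ?_⟩
    · rw [Gn.mul_k]; exact add_nonneg hp1 hq1
    · rw [Gn.mul_v]; exact mul_mem (hp2 _) (hq2 _)
  one_mem' := ⟨by rw [Gn.one_k], fun i => by rw [Gn.one_v]; exact one_mem P⟩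

/-- The Garside element `𝐃 = δ(Δ,…,Δ)` of `G(n)`. -/
def Dn (G : Type*) [Group G] (n : ℕ) (Δ : G) : Gn G n := ⟨1, fun _ => Δ⟩

lemma Gn.ext' {G : Type*} [Group G] {n : ℕ} {p q : Gn G n}
    (h1 : p.k = q.k) (h2 : ∀ i, p.v i = q.v i) : p = q := by
  cases p; cases q; simp only [Gn.mk.injEq]
  exact ⟨h1, funext h2⟩

@[simp] lemma Gn.inv_k {G : Type*} [Group G] {n : ℕ} (p : Gn G n) : (p⁻¹).k = -p.k := rfl
@[simp] lemma Gn.inv_v {G : Type*} [Group G] {n : ℕ} (p : Gn G n) (i : ZMod n) :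
    (p⁻¹).v i = (p.v (i + (p.k : ZMod n)))⁻¹ := rfl

lemma mem_GnPos {G : Type*} [Group G] {n : ℕ} {P : Submonoid G} {p : Gn G n} :
    p ∈ GnPos n P ↔ 0 ≤ p.k ∧ ∀ i, p.v i ∈ P := Iff.rfl

lemma Dn_pow {G : Type*} [Group G] {n : ℕ} (Δ : G) (m : ℕ) :
    Dn G n Δ ^ m = ⟨(m : ℤ), fun _ => Δ ^ m⟩ := by
  induction m with
  | zero => exact Gn.ext' (by simp [Gn.one_k]) (fun i => by simp [Gn.one_v])
  | succ m ih =>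
      rw [pow_succ, ih]
      refine Gn.ext' ?_ (fun i => ?_)
      · show (m : ℤ) + 1 = ((m + 1 : ℕ) : ℤ); push_cast; ring
      · show Δ ^ m * Δ = Δ ^ (m + 1); rw [pow_succ]

lemma Dn_zpow {G : Type*} [Group G] {n : ℕ} (Δ : G) (t : ℤ) :
    Dn G n Δ ^ t = ⟨t, fun _ => Δ ^ t⟩ := by
  cases t with
  | ofNat m =>
      rw [Int.ofNat_eq_natCast, zpow_natCast, Dn_pow]
      exact Gn.ext' rfl (fun i => by rw [zpow_natCast])
  | negSucc m =>
      rw [zpow_negSucc, Dn_pow]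
      refine Gn.ext' ?_ (fun i => ?_)
      · show -((m + 1 : ℕ) : ℤ) = Int.negSucc m; simp [Int.negSucc_eq]
      · show (Δ ^ (m + 1))⁻¹ = Δ ^ Int.negSucc m; rw [zpow_negSucc]

/-- **Lemma 5.2 (1),(2).** In `G(n)`,
`inf(δ^k(g₁,…,gₙ)) = min{k, inf(g₁), …, inf(gₙ)}` and
`sup(δ^k(g₁,…,gₙ)) = max{k, sup(g₁), …, sup(gₙ)}`. -/
theorem gn_inf_sup {G : Type*} [Group G] (P : Submonoid G) (Δ : G)
    (hG : IsGarsideGroup P Δ)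
    (n : ℕ) (hn : 1 ≤ n) (k : ℤ) (gs : ZMod n → G) (rs ss : ZMod n → ℤ)
    (hr : ∀ i, IsGreatest {t : ℤ | gdvdL P (Δ ^ t) (gs i)} (rs i))
    (hs : ∀ i, IsLeast {t : ℤ | gdvdL P (gs i) (Δ ^ t)} (ss i))
    (mn mx : ℤ)
    (hmn : IsLeast (insert k (Set.range rs)) mn)
    (hmx : IsGreatest (insert k (Set.range ss)) mx) :
    IsGreatest {t : ℤ | gdvdL (GnPos n P) (Dn G n Δ ^ t) (Gn.mk k gs)} mn ∧
    IsLeast {t : ℤ | gdvdL (GnPos n P) (Gn.mk k gs) (Dn G n Δ ^ t)} mx := by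
  obtain ⟨hΔP, -⟩ := hG.2.2
  have hpow : ∀ m : ℤ, 0 ≤ m → Δ ^ m ∈ P := by
    intro m hm
    lift m to ℕ using hm
    rw [zpow_natCast]; exact pow_mem hΔP m
  have hDown : ∀ i, ∀ t, t ≤ rs i → (Δ ^ t)⁻¹ * gs i ∈ P := by
    intro i t ht
    have h1 : (Δ ^ (rs i))⁻¹ * gs i ∈ P := (hr i).1
    have heq : (Δ ^ t)⁻¹ * gs i = Δ ^ (rs i - t) * ((Δ ^ (rs i))⁻¹ * gs i) := by
      group
    rw [heq]
    exact mul_mem (hpow _ (by omega)) h1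
  have hUp : ∀ i, ∀ t, ss i ≤ t → (gs i)⁻¹ * Δ ^ t ∈ P := by
    intro i t ht
    have h1 : (gs i)⁻¹ * Δ ^ (ss i) ∈ P := (hs i).1
    have heq : (gs i)⁻¹ * Δ ^ t = ((gs i)⁻¹ * Δ ^ (ss i)) * Δ ^ (t - ss i) := by
      group
    rw [heq]
    exact mul_mem h1 (hpow _ (by omega))
  have hL : ∀ t : ℤ, gdvdL (GnPos n P) (Dn G n Δ ^ t) (Gn.mk k gs) ↔ t ≤ mn := by
    intro t
    unfold gdvdL
    rw [Dn_zpow, mem_GnPos]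
    simp only [Gn.mul_k, Gn.inv_k, Gn.mul_v, Gn.inv_v]
    constructor
    · rintro ⟨h1, h2⟩
      have hk : t ≤ k := by omega
      have hrs : ∀ i, t ≤ rs i := fun i => (hr i).2 (h2 i)
      rcases Set.mem_insert_iff.mp hmn.1 with h | ⟨i, rfl⟩
      · omega
      · exact hrs i
    · intro ht
      have hk : mn ≤ k := hmn.2 (Set.mem_insert k _)
      refine ⟨by omega, fun i => ?_⟩
      exact hDown i t (le_trans ht (hmn.2 (Set.mem_insert_of_mem _ ⟨i, rfl⟩)))
  have hR : ∀ t : ℤ, gdvdL (GnPos n P) (Gn.mk k gs) (Dn G n Δ ^ t) ↔ mx ≤ t := by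
    intro t
    unfold gdvdL
    rw [Dn_zpow, mem_GnPos]
    simp only [Gn.mul_k, Gn.inv_k, Gn.mul_v, Gn.inv_v]
    constructor
    · rintro ⟨h1, h2⟩
      have hk : k ≤ t := by omega
      have hss : ∀ j, ss j ≤ t := by
        intro j
        have := h2 (j + (t : ZMod n) - (k : ZMod n))
        have hj : j + (t : ZMod n) - (k : ZMod n) - (t : ZMod n) + (k : ZMod n) = j := by ring
        rw [hj] at this
        exact (hs j).2 this
      rcases Set.mem_insert_iff.mp hmx.1 with h | ⟨i, rfl⟩
      · omega
      · exact hss i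
    · intro ht
      have hk : k ≤ mx := hmx.2 (Set.mem_insert k _)
      refine ⟨by omega, fun i => ?_⟩
      exact hUp _ t (le_trans (hmx.2 (Set.mem_insert_of_mem _ ⟨_, rfl⟩)) ht)
  constructor
  · exact ⟨(hL mn).mpr le_rfl, fun t ht => (hL t).mp ht⟩
  · exact ⟨(hR mx).mpr le_rfl, fun t ht => (hR t).mp ht⟩
end

section
/- Let G be a Garside group with positive monoid G⁺ and Garside element Δ, let n ≥ 1, g ∈ G, k ∈ ℤ, and set α = δ^k(g, …, g) ∈ G(n). Suppose g is in its super summit set, i.e. for every conjugate h of g in G and every integer t: Δ^t ≤_L h implies Δ^t ≤_L g, and h ≤_L Δ^t implies g ≤_L Δ^t. Then α is in its super summit set in G(n): for every conjugate β of α in G(n) and every integer t, 𝐃^t ≤_L β implies 𝐃^t ≤_L α, and β ≤_L 𝐃^t implies α ≤_L 𝐃^t. -/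
/-!
A conjugate `β = γ α γ⁻¹` of `α = δ^k(g,…,g)` has exponent `k` and, up to a cyclic shift,
coordinates `cᵢ g c_{i+k}⁻¹` with `c = γ.v`. Let `d` be the right gcd in `G` of the `cᵢ`; it
exists because every element of `G` becomes positive after right multiplication by a power of `Δ`,
so right gcds of `G⁺` extend to `G`. If `Δ^t ≤_L` every coordinate of `β`, then `Δ^t d g⁻¹`
right-divides every `cᵢ`, hence `d`, which says `Δ^t ≤_L d g d⁻¹`; dually (the shift being a
bijection) for `β ≤_L 𝐃^t`. As `d g d⁻¹` is a conjugate of `g`, the hypothesis on `g` concludes.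
-/

section RightDivisibility

variable {G : Type*} [Group G] {P : Submonoid G}

lemma gdvdR_refl (x : G) : gdvdR P x x := by
  simp [gdvdR, one_mem]

lemma gdvdR_trans {x y z : G} (hxy : gdvdR P x y) (hyz : gdvdR P y z) : gdvdR P x z := by
  simpa [gdvdR, mul_assoc] using mul_mem hyz hxy

lemma gdvdR_mul_right_iff (x y z : G) : gdvdR P (x * z) (y * z) ↔ gdvdR P x y := by
  simp [gdvdR, mul_assoc]

lemma dvdR_iff_gdvdR_s10 (a b : P) : dvdR a b ↔ gdvdR P (a : G) b := by
  constructor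
  · rintro ⟨c, rfl⟩
    simp [gdvdR]
  · intro h
    exact ⟨⟨_, h⟩, Subtype.ext (by simp)⟩

end RightDivisibility

section GroupIdentities

variable {G : Type*} [Group G]

lemma conj_eq_of_mul_eq {w x y z : G} (hxy : x * y = w) (hzx : z * x = w) :
    w * y * w⁻¹ = z := by
  subst hzx
  rw [eq_inv_mul_of_mul_eq hxy]
  group

lemma inv_conj_eq_of_mul_eq {w x y z : G} (hxy : x * y = w) (hyz : y * z = w) :
    w⁻¹ * x * w = z := by
  subst hyz
  rw [eq_mul_inv_of_mul_eq hxy]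
  group

end GroupIdentities

namespace IsGarsideElt

variable {G : Type*} [Group G] {P : Submonoid G} {Δ : P}

lemma conj_mem (hΔ : IsGarsideElt Δ) (a : P) :
    (Δ : G) * a * (Δ : G)⁻¹ ∈ P ∧ (Δ : G)⁻¹ * a * Δ ∈ P := by
  have ha : a ∈ Submonoid.closure (Lset Δ) := hΔ.2 ▸ Submonoid.mem_top a
  induction ha using Submonoid.closure_induction with
  | mem s hsL =>
    -- `L(Δ) = R(Δ)` lets us complete `s` to `Δ` on both sides twice over.
    have hsR : s ∈ Rset Δ := hΔ.1 ▸ hsL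
    obtain ⟨c, hc⟩ := hsL
    obtain ⟨e, he⟩ := hsR
    obtain ⟨f, hf⟩ : c ∈ Lset Δ := hΔ.1 ▸ (⟨s, hc⟩ : c ∈ Rset Δ)
    obtain ⟨h, hh⟩ : e ∈ Rset Δ := hΔ.1 ▸ (⟨s, he⟩ : e ∈ Lset Δ)
    have he' : (e : G) * s = Δ := congrArg Subtype.val he
    have hh' : (h : G) * e = Δ := congrArg Subtype.val hh
    have hc' : (s : G) * c = Δ := congrArg Subtype.val hc
    have hf' : (c : G) * f = Δ := congrArg Subtype.val hf
    exact ⟨conj_eq_of_mul_eq he' hh' ▸ h.2, inv_conj_eq_of_mul_eq hc' hf' ▸ f.2⟩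
  | one => simp [one_mem]
  | mul x y _ _ hx hy =>
    constructor
    · simpa [mul_assoc] using mul_mem hx.1 hy.1
    · simpa [mul_assoc] using mul_mem hx.2 hy.2

lemma conj_mem_iff (hΔ : IsGarsideElt Δ) (a : G) : (Δ : G) * a * (Δ : G)⁻¹ ∈ P ↔ a ∈ P := by
  refine ⟨fun h => ?_, fun h => (hΔ.conj_mem ⟨a, h⟩).1⟩
  simpa [mul_assoc] using (hΔ.conj_mem ⟨_, h⟩).2

lemma zpow_conj_mem_iff (hΔ : IsGarsideElt Δ) (s : ℤ) (a : G) :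
    (Δ : G) ^ s * a * ((Δ : G) ^ s)⁻¹ ∈ P ↔ a ∈ P := by
  induction s using Int.induction_on with
  | zero => simp
  | succ s ih =>
    rw [← ih, ← hΔ.conj_mem_iff ((Δ : G) ^ (s : ℤ) * a * ((Δ : G) ^ (s : ℤ))⁻¹)]
    congr! 1
    group
  | pred s ih =>
    rw [← ih, ← hΔ.conj_mem_iff (_ * a * _)]
    congr! 1
    group

lemma exists_inv_mul_pow_mem (hΔ : IsGarsideElt Δ) (b : P) :
    ∃ m : ℕ, (b : G)⁻¹ * (Δ : G) ^ m ∈ P := by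
  have hb : b ∈ Submonoid.closure (Lset Δ) := hΔ.2 ▸ Submonoid.mem_top b
  induction hb using Submonoid.closure_induction with
  | mem s hs =>
    obtain ⟨c, hc⟩ := hs
    refine ⟨1, ?_⟩
    convert c.2 using 1
    rw [← hc]
    push_cast
    group
  | one => exact ⟨0, by simp [one_mem]⟩
  | mul x y _ _ hx hy =>
    obtain ⟨m₁, h₁⟩ := hx
    obtain ⟨m₂, h₂⟩ := hy
    refine ⟨m₁ + m₂, ?_⟩
    have h₁' := (hΔ.zpow_conj_mem_iff (-m₂) _).2 h₁
    convert mul_mem h₂ h₁' using 1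
    push_cast
    group

lemma exists_mul_pow_mem (hΔ : IsGarsideElt Δ)
    (hfrac : ∀ g : G, ∃ a b : P, g = (a : G) * (b : G)⁻¹) (x : G) :
    ∃ m : ℕ, x * (Δ : G) ^ m ∈ P := by
  obtain ⟨a, b, rfl⟩ := hfrac x
  obtain ⟨m, hm⟩ := hΔ.exists_inv_mul_pow_mem b
  exact ⟨m, by simpa [mul_assoc] using mul_mem a.2 hm⟩

end IsGarsideElt

section RightGcd

variable {G : Type*} [Group G] {P : Submonoid G} {Δ : G}

lemma IsGlbR.gdvdR_iff (hΔ : Δ ∈ P) (hglb : ∀ a b : P, ∃ d, IsGlbR a b d)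
    (hpow : ∀ x : G, ∃ m : ℕ, x * Δ ^ m ∈ P) {a b d : P} (h : IsGlbR a b d) (c : G) :
    gdvdR P c d ↔ gdvdR P c a ∧ gdvdR P c b := by
  simp only [IsGlbR, dvdR_iff_gdvdR_s10] at h
  obtain ⟨hda, hdb, hd⟩ := h
  refine ⟨fun hcd => ⟨gdvdR_trans hcd hda, gdvdR_trans hcd hdb⟩, fun ⟨hca, hcb⟩ => ?_⟩
  obtain ⟨m, hm⟩ := hpow c
  have haΔ : (a : G) * Δ ^ m ∈ P := mul_mem a.2 (pow_mem hΔ m)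
  have hbΔ : (b : G) * Δ ^ m ∈ P := mul_mem b.2 (pow_mem hΔ m)
  obtain ⟨e, hea, heb, he⟩ := hglb ⟨_, haΔ⟩ ⟨_, hbΔ⟩
  simp only [dvdR_iff_gdvdR_s10] at hea heb he
  -- `Δ ^ m` right-divides both `a Δ ^ m` and `b Δ ^ m`, so `e = w Δ ^ m` with `w` positive.
  have hw : (e : G) * (Δ ^ m)⁻¹ ∈ P := by
    simpa [gdvdR] using he ⟨_, pow_mem hΔ m⟩ (by simp [gdvdR, a.2]) (by simp [gdvdR, b.2])
  have hwd : gdvdR P ((e : G) * (Δ ^ m)⁻¹) d := by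
    refine hd ⟨_, hw⟩ ?_ ?_
    · rwa [← gdvdR_mul_right_iff _ _ (Δ ^ m), inv_mul_cancel_right]
    · rwa [← gdvdR_mul_right_iff _ _ (Δ ^ m), inv_mul_cancel_right]
  have hce : gdvdR P (c * Δ ^ m) e :=
    he ⟨_, hm⟩ ((gdvdR_mul_right_iff _ _ _).2 hca) ((gdvdR_mul_right_iff _ _ _).2 hcb)
  refine gdvdR_trans ?_ hwd
  rwa [← gdvdR_mul_right_iff _ _ (Δ ^ m), inv_mul_cancel_right]

lemma exists_gdvdR_glb (hΔ : Δ ∈ P) (hglb : ∀ a b : P, ∃ d, IsGlbR a b d)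
    (hpow : ∀ x : G, ∃ m : ℕ, x * Δ ^ m ∈ P) (x y : G) :
    ∃ d : G, ∀ c, gdvdR P c d ↔ gdvdR P c x ∧ gdvdR P c y := by
  obtain ⟨m₁, hx⟩ := hpow x
  obtain ⟨m₂, hy⟩ := hpow y
  have hx' : x * Δ ^ (m₁ + m₂) ∈ P := by
    rw [pow_add, ← mul_assoc]; exact mul_mem hx (pow_mem hΔ m₂)
  have hy' : y * Δ ^ (m₁ + m₂) ∈ P := by
    rw [add_comm, pow_add, ← mul_assoc]; exact mul_mem hy (pow_mem hΔ m₁)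
  obtain ⟨d, hd⟩ := hglb ⟨_, hx'⟩ ⟨_, hy'⟩
  refine ⟨d * (Δ ^ (m₁ + m₂))⁻¹, fun c => ?_⟩
  rw [← gdvdR_mul_right_iff c _ (Δ ^ (m₁ + m₂)), inv_mul_cancel_right,
    hd.gdvdR_iff hΔ hglb hpow, gdvdR_mul_right_iff, gdvdR_mul_right_iff]

lemma exists_gdvdR_glb_finset (hΔ : Δ ∈ P) (hglb : ∀ a b : P, ∃ d, IsGlbR a b d)
    (hpow : ∀ x : G, ∃ m : ℕ, x * Δ ^ m ∈ P) {ι : Type*} (f : ι → G) (x : G) (s : Finset ι) :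
    ∃ d : G, ∀ c, gdvdR P c d ↔ gdvdR P c x ∧ ∀ i ∈ s, gdvdR P c (f i) := by
  classical
  induction s using Finset.induction_on with
  | empty => exact ⟨x, by simp⟩
  | insert i s _ ih =>
    obtain ⟨d, hd⟩ := ih
    obtain ⟨d', hd'⟩ := exists_gdvdR_glb hΔ hglb hpow d (f i)
    exact ⟨d', fun c => by rw [hd', hd, Finset.forall_mem_insert]; tauto⟩

lemma exists_gdvdR_iInf (hΔ : Δ ∈ P) (hglb : ∀ a b : P, ∃ d, IsGlbR a b d)
    (hpow : ∀ x : G, ∃ m : ℕ, x * Δ ^ m ∈ P) {ι : Type*} [Fintype ι] [Nonempty ι]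
    (f : ι → G) : ∃ d : G, ∀ c, gdvdR P c d ↔ ∀ i, gdvdR P c (f i) := by
  obtain ⟨i₀⟩ := ‹Nonempty ι›
  obtain ⟨d, hd⟩ := exists_gdvdR_glb_finset hΔ hglb hpow f (f i₀) Finset.univ
  exact ⟨d, fun c => by
    simp only [hd c, Finset.mem_univ, forall_const]
    exact ⟨And.right, fun h => ⟨h i₀, h⟩⟩⟩

end RightGcd

section SuperSummit

variable {G : Type*} [Group G] {P : Submonoid G} {Δ : G}

lemma gdvdL_zpow_iff (hconj : ∀ (s : ℤ) (a : G), Δ ^ s * a * (Δ ^ s)⁻¹ ∈ P ↔ a ∈ P)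
    (x : G) (t : ℤ) : gdvdL P x (Δ ^ t) ↔ gdvdL P (Δ ^ (-t)) x⁻¹ := by
  unfold gdvdL
  rw [← hconj t]
  congr! 1
  group

lemma zpow_gdvdL_conj_of_forall (hconj : ∀ (s : ℤ) (a : G), Δ ^ s * a * (Δ ^ s)⁻¹ ∈ P ↔ a ∈ P)
    {ι : Type*} {f : ι → G} {d : G} (hd : ∀ c, gdvdR P c d ↔ ∀ i, gdvdR P c (f i))
    (σ : ι → ι) (g : G) (t : ℤ) (h : ∀ i, gdvdL P (Δ ^ t) (f i * g * (f (σ i))⁻¹)) :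
    gdvdL P (Δ ^ t) (d * g * d⁻¹) := by
  have hdf : ∀ i, gdvdR P d (f i) := (hd d).1 (gdvdR_refl d)
  have hd' : gdvdR P (Δ ^ t * d * g⁻¹) d := by
    refine (hd _).2 fun i => ?_
    convert (hconj t _).2 (mul_mem (h i) (hdf (σ i))) using 1
    unfold gdvdR
    group
  unfold gdvdL
  convert (hconj (-t) _).2 hd' using 1
  group

lemma conj_gdvdL_zpow_of_forall (hconj : ∀ (s : ℤ) (a : G), Δ ^ s * a * (Δ ^ s)⁻¹ ∈ P ↔ a ∈ P)
    {ι : Type*} {f : ι → G} {d : G} (hd : ∀ c, gdvdR P c d ↔ ∀ i, gdvdR P c (f i))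
    (σ : Equiv.Perm ι) (g : G) (t : ℤ) (h : ∀ i, gdvdL P (f i * g * (f (σ i))⁻¹) (Δ ^ t)) :
    gdvdL P (d * g * d⁻¹) (Δ ^ t) := by
  rw [gdvdL_zpow_iff hconj]
  convert zpow_gdvdL_conj_of_forall hconj hd σ.symm g⁻¹ (-t) (fun i => ?_) using 1
  · group
  · convert (gdvdL_zpow_iff hconj _ t).1 (h (σ.symm i)) using 2
    simp [mul_assoc]

end SuperSummit

attribute [ext] Gn

namespace Gn

variable {G : Type*} [Group G] {n : ℕ}

@[simp] lemma inv_k_s10 (p : Gn G n) : p⁻¹.k = -p.k := rfl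
@[simp] lemma inv_v_s10 (p : Gn G n) (i : ZMod n) : p⁻¹.v i = (p.v (i + (p.k : ZMod n)))⁻¹ := rfl

lemma mem_GnPos {P : Submonoid G} {p : Gn G n} : p ∈ GnPos n P ↔ 0 ≤ p.k ∧ ∀ i, p.v i ∈ P :=
  Iff.rfl

lemma Dn_zpow (Δ : G) (t : ℤ) : Dn G n Δ ^ t = ⟨t, fun _ => Δ ^ t⟩ := by
  induction t using Int.induction_on with
  | zero => ext <;> simp
  | succ s ih => rw [zpow_add_one, ih]; ext <;> simp [Dn, zpow_add_one]
  | pred s ih =>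
    rw [zpow_sub_one, ih]
    ext
    · simp [Dn, sub_eq_add_neg]
    · simp [Dn, zpow_sub_one]

lemma zpow_Dn_gdvdL_iff {P : Submonoid G} (Δ : G) (t : ℤ) (p : Gn G n) :
    gdvdL (GnPos n P) (Dn G n Δ ^ t) p ↔ t ≤ p.k ∧ ∀ i, gdvdL P (Δ ^ t) (p.v i) := by
  simp only [gdvdL, mem_GnPos, Dn_zpow, mul_k, mul_v, inv_k_s10, inv_v_s10]
  exact and_congr (by omega) Iff.rfl

lemma gdvdL_zpow_Dn_iff {P : Submonoid G} (Δ : G) (t : ℤ) (p : Gn G n) :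
    gdvdL (GnPos n P) p (Dn G n Δ ^ t) ↔ p.k ≤ t ∧ ∀ i, gdvdL P (p.v i) (Δ ^ t) := by
  simp only [gdvdL, mem_GnPos, Dn_zpow, mul_k, mul_v, inv_k_s10, inv_v_s10]
  exact and_congr (by omega) ⟨fun h i => by
    simpa [show i + (t : ZMod n) - p.k - t + p.k = i by ring] using h (i + t - p.k),
    fun h i => h _⟩

lemma exists_of_isConj_mk_const {k : ℤ} {g : G} {β : Gn G n}
    (h : IsConj (⟨k, fun _ => g⟩ : Gn G n) β) :
    β.k = k ∧ ∃ (c : ZMod n → G) (s : ZMod n), ∀ i, β.v (i + s) = c i * g * (c (i + k))⁻¹ := by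
  obtain ⟨γ, rfl⟩ := isConj_iff.1 h
  refine ⟨by simp, γ.v, k - γ.k, fun i => ?_⟩
  simp only [mul_v, inv_v_s10, inv_k_s10, Int.cast_neg, sub_neg_eq_add]
  rw [show i + (k - γ.k) + γ.k - k = i by ring, show i + (k - γ.k) + γ.k = i + k by ring]

end Gn

/-- **Corollary 5.3 (2).** If `g` is contained in its super summit set, then so is
`α = δ^k(g,…,g) ∈ G(n)`. -/
theorem gn_super_summit {G : Type*} [Group G] (P : Submonoid G) (Δ : G)
    (hG : IsGarsideGroup P Δ)
    (n : ℕ) (hn : 1 ≤ n) (k : ℤ) (g : G)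
    (hss : ∀ h : G, IsConj g h → ∀ t : ℤ,
      (gdvdL P (Δ ^ t) h → gdvdL P (Δ ^ t) g) ∧
      (gdvdL P h (Δ ^ t) → gdvdL P g (Δ ^ t))) :
    ∀ β : Gn G n, IsConj (Gn.mk k (fun _ => g)) β → ∀ t : ℤ,
      (gdvdL (GnPos n P) (Dn G n Δ ^ t) β →
        gdvdL (GnPos n P) (Dn G n Δ ^ t) (Gn.mk k (fun _ => g))) ∧
      (gdvdL (GnPos n P) β (Dn G n Δ ^ t) →
        gdvdL (GnPos n P) (Gn.mk k (fun _ => g)) (Dn G n Δ ^ t)) := by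
  intro β hβ t
  obtain ⟨⟨-, -, -, -, -, -, hglb, -, -⟩, hfrac, hΔP, hΔ⟩ := hG
  have : NeZero n := ⟨by omega⟩
  obtain ⟨hk, c, s, hc⟩ := Gn.exists_of_isConj_mk_const hβ
  obtain ⟨d, hd⟩ := exists_gdvdR_iInf hΔP hglb (hΔ.exists_mul_pow_mem hfrac) c
  have hg := hss _ (isConj_iff.2 ⟨d, rfl⟩) t
  simp only [Gn.zpow_Dn_gdvdL_iff, Gn.gdvdL_zpow_Dn_iff, hk]
  refine ⟨fun ⟨htk, hβt⟩ => ⟨htk, fun _ => hg.1 ?_⟩, fun ⟨hkt, hβt⟩ => ⟨hkt, fun _ => hg.2 ?_⟩⟩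
  · exact zpow_gdvdL_conj_of_forall hΔ.zpow_conj_mem_iff hd (· + k) g t
      fun i => hc i ▸ hβt (i + s)
  · exact conj_gdvdL_zpow_of_forall hΔ.zpow_conj_mem_iff hd (Equiv.addRight (k : ZMod n)) g t
      fun i => hc i ▸ hβt (i + s)
end

section
/- Let G be a group, let n ≥ 1, and let k be an integer with k ≡ 1 (mod n). Let g₁, …, gₙ, h₁, …, hₙ ∈ G. Then δ^k(g₁,…,gₙ) and δ^k(h₁,…,hₙ) are conjugate in G(n) if and only if g₁g₂⋯gₙ and h₁h₂⋯hₙ are conjugate in G. -/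
/-- The ordered product `g₁ · g₂ ⋯ gₙ` of a tuple indexed by `ZMod n`. -/
def tupProd {G : Type*} [Monoid G] {n : ℕ} (v : ZMod n → G) : G :=
  ((List.range n).map (fun j => v (j : ZMod n))).prod


section Aux

variable {G : Type*}

/-- Product of the first `j` entries of the tuple. -/
def pref [Monoid G] {n : ℕ} (v : ZMod n → G) (j : ℕ) : G :=
  ((List.range j).map (fun t => v (t : ZMod n))).prod

lemma pref_zero [Monoid G] {n : ℕ} (v : ZMod n → G) : pref v 0 = 1 := rfl

lemma pref_succ [Monoid G] {n : ℕ} (v : ZMod n → G) (j : ℕ) :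
    pref v (j + 1) = pref v j * v (j : ZMod n) := by
  simp [pref, List.range_succ]

lemma tupProd_eq_pref [Monoid G] {n : ℕ} (v : ZMod n → G) : tupProd v = pref v n := rfl

lemma pref_head_split [Monoid G] {n : ℕ} (v : ZMod n → G) (j : ℕ) :
    pref v (j + 1) = v 0 * pref (fun i => v (i + 1)) j := by
  induction j with
  | zero => simp [pref_succ, pref_zero]
  | succ j ih =>
    rw [pref_succ, ih, pref_succ, mul_assoc]
    congr 2
    simp only [Nat.cast_add, Nat.cast_one]

lemma conj_shift_one [Group G] {n : ℕ} (hn : 1 ≤ n) (v : ZMod n → G) :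
    IsConj (tupProd (fun i => v (i + 1))) (tupProd v) := by
  obtain ⟨m, rfl⟩ : ∃ m, n = m + 1 := ⟨n - 1, by omega⟩
  have h1 : tupProd (fun i => v (i + 1)) = pref (fun i : ZMod (m+1) => v (i + 1)) m * v 0 := by
    rw [tupProd_eq_pref, pref_succ]
    congr 2
    simp
  have h2 : tupProd v = v 0 * pref (fun i : ZMod (m+1) => v (i + 1)) m := by
    rw [tupProd_eq_pref, pref_head_split]
  rw [h1, h2, isConj_iff]
  exact ⟨v 0, by group⟩

lemma conj_shift_nat [Group G] {n : ℕ} (hn : 1 ≤ n) (v : ZMod n → G) (a : ℕ) :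
    IsConj (tupProd (fun i => v (i + (a : ZMod n)))) (tupProd v) := by
  induction a with
  | zero => exact isConj_iff.mpr ⟨1, by simp⟩
  | succ a ih =>
    have h1 := conj_shift_one hn (fun i : ZMod n => v (i + (a : ZMod n)))
    have he : (fun i : ZMod n => v (i + ((a + 1 : ℕ) : ZMod n)))
        = (fun i : ZMod n => v (i + 1 + (a : ZMod n))) := by
      funext i; congr 1; push_cast; ring
    rw [he]
    exact h1.trans ih

lemma conj_shift [Group G] {n : ℕ} [NeZero n] (hn : 1 ≤ n) (v : ZMod n → G) (a : ZMod n) :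
    IsConj (tupProd (fun i => v (i + a))) (tupProd v) := by
  have : a = ((a.val : ℕ) : ZMod n) := ((ZMod.natCast_val a).trans (ZMod.cast_id n a)).symm
  rw [this]
  exact conj_shift_nat hn v a.val

end Aux

/-- **Lemma 5.4.** If `k ≡ 1 (mod n)`, then `δ^k(g₁,…,gₙ)` and `δ^k(h₁,…,hₙ)` are
conjugate in `G(n)` if and only if `g₁⋯gₙ` and `h₁⋯hₙ` are conjugate in `G`. -/
theorem gn_conj_iff {G : Type*} [Group G] (n : ℕ) (hn : 1 ≤ n)
    (k : ℤ) (hk : Int.ModEq (n : ℤ) k 1) (gs hs : ZMod n → G) :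
    IsConj (Gn.mk k gs) (Gn.mk k hs) ↔ IsConj (tupProd gs) (tupProd hs) := by
  haveI : NeZero n := ⟨by omega⟩
  have hk1 : ((k : ℤ) : ZMod n) = 1 := by
    have := (ZMod.intCast_eq_intCast_iff k 1 n).mpr hk
    simpa using this
  constructor
  · rintro ⟨c, hc⟩
    set m : ZMod n := (((c : Gn G n).k : ℤ) : ZMod n) with hm
    set u : ZMod n → G := (c : Gn G n).v with hu
    have hrel : ∀ i : ZMod n, u (i - 1) * gs i = hs (i - m) * u i := by
      intro i
      have h := congrFun (congrArg Gn.v hc) i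
      simpa [Gn.mul_v, hk1, ← hm, ← hu] using h
    have key : ∀ j : ℕ, u (-1) * pref gs j
        = pref (fun t => hs (t - m)) j * u ((j : ZMod n) - 1) := by
      intro j
      induction j with
      | zero => simp [pref_zero]
      | succ j ih =>
        have hc1 : ((j + 1 : ℕ) : ZMod n) - 1 = ((j : ℕ) : ZMod n) := by push_cast; ring
        simp only [pref_succ]
        rw [hc1, ← mul_assoc, ih, mul_assoc, hrel, ← mul_assoc]
    have hfin := key n
    rw [ZMod.natCast_self, zero_sub, ← tupProd_eq_pref, ← tupProd_eq_pref] at hfin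
    have h1 : IsConj (tupProd gs) (tupProd (fun t => hs (t - m))) := by
      rw [isConj_iff]
      exact ⟨u (-1), by rw [hfin]; group⟩
    have h2 : IsConj (tupProd (fun t => hs (t - m))) (tupProd hs) := by
      have := conj_shift hn hs (-m)
      simpa [sub_eq_add_neg] using this
    exact h1.trans h2
  · intro hconj
    obtain ⟨x, hx⟩ := isConj_iff.mp hconj
    have hx' : x * tupProd gs = tupProd hs * x := by
      rw [← hx]; group
    set u : ZMod n → G := fun i => (pref hs (i.val + 1))⁻¹ * x * pref gs (i.val + 1) with hu
    have key : ∀ i : ZMod n, u (i - (k : ZMod n)) * gs i = hs (i - ((0 : ℤ) : ZMod n)) * u i := by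
      intro i
      rw [hk1]
      simp only [Int.cast_zero, sub_zero]
      have hiv : ((i.val : ℕ) : ZMod n) = i := (ZMod.natCast_val i).trans (ZMod.cast_id n i)
      have hjlt : i.val < n := ZMod.val_lt i
      rcases Nat.eq_zero_or_eq_succ_pred i.val with h0 | hsucc
      · -- i = 0
        have hi0 : i = 0 := by rw [← hiv, h0]; simp
        subst hi0
        have hneg : (-1 : ZMod n) = ((n - 1 : ℕ) : ZMod n) := by
          have : ((n : ℕ) : ZMod n) = 0 := ZMod.natCast_self n
          push_cast [Nat.cast_sub hn]
          rw [this]; ring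
        have hval : ((n - 1 : ℕ) : ZMod n).val = n - 1 := ZMod.val_cast_of_lt (by omega)
        have hu1 : u (0 - 1) = x := by
          rw [zero_sub, hneg, hu]
          simp only [hval]
          rw [Nat.sub_add_cancel hn, ← tupProd_eq_pref, ← tupProd_eq_pref]
          rw [mul_assoc, hx']
          group
        rw [hu1, hu]
        simp only [ZMod.val_zero, zero_add]
        have hp1g : pref gs 1 = gs 0 := by rw [pref_succ, pref_zero, one_mul]; norm_num
        have hp1h : pref hs 1 = hs 0 := by rw [pref_succ, pref_zero, one_mul]; norm_num
        rw [hp1g, hp1h]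
        group
      · -- i.val = j + 1
        set j := i.val - 1 with hj
        have hival : i.val = j + 1 := by omega
        have hi : i = ((j + 1 : ℕ) : ZMod n) := by rw [← hiv, hival]
        have hjlt' : j < n := by omega
        have hsub : i - 1 = ((j : ℕ) : ZMod n) := by rw [hi]; push_cast; ring
        have hvj : ((j : ℕ) : ZMod n).val = j := ZMod.val_cast_of_lt hjlt'
        rw [hsub, hu]
        simp only [hvj, hival]
        have hg : pref gs (j + 1 + 1) = pref gs (j + 1) * gs i := by
          rw [pref_succ, ← hi]
        have hh : pref hs (j + 1 + 1) = pref hs (j + 1) * hs i := by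
          rw [pref_succ, ← hi]
        rw [hg, hh]
        group
    have hsc : (Gn.mk 0 u : Gn G n) * Gn.mk k gs = Gn.mk k hs * Gn.mk 0 u := by
      show Gn.gmul _ _ = Gn.gmul _ _
      simp only [Gn.gmul, Gn.mk.injEq]
      exact ⟨by ring, funext key⟩
    rw [isConj_iff]
    exact ⟨Gn.mk 0 u, by rw [mul_inv_eq_iff_eq_mul, hsc]⟩
end

section
/- Let G be a Garside group with positive monoid G⁺ and Garside element Δ, let g ∈ G and n ≥ 1. Suppose s is the least element of {t ∈ ℤ : h ≤_L Δ^t for some conjugate h of g} and u is the least element of {t ∈ ℤ : h ≤_L Δ^t for some conjugate h of gⁿ}. Then n·s − n < u ≤ n·s. Moreover, if in addition r is the greatest element of {t ∈ ℤ : Δ^t ≤_L h for some conjugate h of g} and m is the greatest element of {t ∈ ℤ : Δ^t ≤_L h for some conjugate h of gⁿ}, then n·((s − r) − 2) < u − m ≤ n·(s − r). -/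
/-!
If a conjugate `h` of `g` satisfies `h ≤_L Δ^s`, then `hⁿ ≤_L Δ^{ns}`, since conjugation by `Δ`
preserves `G⁺`; dually for lower bounds. Conversely, if `xⁿ ≤_L Δ^{nt}`, the map
`c ↦ x⁻¹ c Δ^t` is monotone for `≤_L` and returns above `1` after `n` steps, so the join `c` of
the first `n` points of its orbit satisfies `c ≤_L x⁻¹ c Δ^t`, i.e. the conjugate `c⁻¹ x c` is
`≤_L Δ^t`. Thus `u ≤ n t` forces `s ≤ t`, and dually `n t ≤ m` forces `t ≤ r`.
-/

section PositiveCone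

variable {G : Type*} [Group G] (P : Submonoid G)

theorem gdvdL_refl (x : G) : gdvdL P x x := by
  simp [gdvdL, one_mem]

variable {P}

theorem gdvdL_trans {x y z : G} (hxy : gdvdL P x y) (hyz : gdvdL P y z) : gdvdL P x z := by
  simpa [gdvdL, mul_assoc] using mul_mem hxy hyz

@[simp]
theorem gdvdL_mul_left_iff (z x y : G) : gdvdL P (z * x) (z * y) ↔ gdvdL P x y := by
  simp [gdvdL, mul_assoc]

theorem dvdL_mk_iff {p q : G} (hp : p ∈ P) (hq : q ∈ P) :
    dvdL (⟨p, hp⟩ : P) ⟨q, hq⟩ ↔ gdvdL P p q := by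
  constructor
  · rintro ⟨c, hc⟩
    have hc : p * c = q := congrArg Subtype.val hc
    simp [gdvdL, ← hc]
  · intro h
    exact ⟨⟨p⁻¹ * q, h⟩, Subtype.ext (mul_inv_cancel_left p q)⟩

variable (P) in
abbrev gdvdLPreorder : Preorder G where
  le := gdvdL P
  le_refl := gdvdL_refl P
  le_trans _ _ _ := gdvdL_trans

end PositiveCone

section Iterate

variable {α : Type*} [Preorder α]

theorem exists_le_iff_forall_lt (hjoin : ∀ a b : α, ∃ d, ∀ e, d ≤ e ↔ a ≤ e ∧ b ≤ e)
    (x : ℕ → α) {n : ℕ} (hn : 0 < n) : ∃ d, ∀ e, d ≤ e ↔ ∀ i < n, x i ≤ e := by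
  induction n, hn using Nat.le_induction with
  | base => exact ⟨x 0, fun e => by simp⟩
  | succ n _ ih =>
    obtain ⟨c, hc⟩ := ih
    obtain ⟨d, hd⟩ := hjoin c (x n)
    refine ⟨d, fun e => ?_⟩
    rw [hd, hc, Nat.forall_lt_succ_right]

-- The witness is the join of `x, f x, …, f^[n-1] x`.
theorem Monotone.exists_le_map_of_le_iterate
    (hjoin : ∀ a b : α, ∃ d, ∀ e, d ≤ e ↔ a ≤ e ∧ b ≤ e) {f : α → α} (hf : Monotone f)
    {x : α} {n : ℕ} (hn : 0 < n) (hx : x ≤ f^[n] x) : ∃ c, c ≤ f c := by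
  obtain ⟨c, hc⟩ := exists_le_iff_forall_lt hjoin (fun i => f^[i] x) hn
  have horbit : ∀ i < n, f^[i] x ≤ c := (hc c).1 le_rfl
  refine ⟨c, (hc (f c)).2 fun i hi => ?_⟩
  obtain ⟨j, rfl⟩ : ∃ j, n = j + 1 := ⟨n - 1, by omega⟩
  rcases i with _ | i
  · calc f^[0] x ≤ f^[j + 1] x := hx
      _ = f (f^[j] x) := Function.iterate_succ_apply' f j x
      _ ≤ f c := hf (horbit j (by omega))
  · rw [Function.iterate_succ_apply']
    exact hf (horbit i (by omega))

end Iterate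

namespace IsGarsideGroup

variable {G : Type*} [Group G] {P : Submonoid G} {Δ : G}

theorem delta_mem (hG : IsGarsideGroup P Δ) : Δ ∈ P := hG.2.2.1

theorem induction_on (hG : IsGarsideGroup P Δ) {p : G → Prop} (one : p 1)
    (mul : ∀ x y, x ∈ P → y ∈ P → p x → p y → p (x * y))
    (divisor : ∀ y c, y ∈ P → c ∈ P → y * c = Δ → p y) {x : G} (hx : x ∈ P) : p x := by
  obtain ⟨-, -, hΔ, -, hgen⟩ := hG
  let Q : Submonoid P :=
    { carrier := {w | p w}
      one_mem' := one
      mul_mem' := fun {a b} ha hb => mul a b a.2 b.2 ha hb }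
  have hQ : Submonoid.closure (Lset (⟨Δ, hΔ⟩ : P)) ≤ Q :=
    Submonoid.closure_le.2 fun y ⟨c, hc⟩ => divisor y c y.2 c.2 (congrArg Subtype.val hc)
  rw [hgen] at hQ
  exact hQ (Submonoid.mem_top ⟨x, hx⟩)

theorem exists_mul_eq_iff_exists_mul_eq (hG : IsGarsideGroup P Δ) {c : G} (hc : c ∈ P) :
    (∃ e ∈ P, c * e = Δ) ↔ ∃ e ∈ P, e * c = Δ := by
  obtain ⟨-, -, hΔ, hLR, -⟩ := hG
  have h := Set.ext_iff.1 hLR ⟨c, hc⟩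
  simpa only [Lset, Rset, dvdL, dvdR, Set.mem_ofPred_eq, Subtype.exists, Subtype.ext_iff,
    Submonoid.coe_mul, exists_prop] using h

theorem delta_inv_mul_mul_delta_mem (hG : IsGarsideGroup P Δ) {x : G} (hx : x ∈ P) :
    Δ⁻¹ * x * Δ ∈ P := by
  refine hG.induction_on (p := fun x => Δ⁻¹ * x * Δ ∈ P) (by simp [one_mem]) ?_ ?_ hx
  · intro x y _ _ hx hy
    simpa [mul_assoc] using mul_mem hx hy
  · intro y c hy hc hyc
    -- the cofactor `c` of `y` is also a left divisor of `Δ = c e`, and `Δ⁻¹ y Δ = e`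
    obtain ⟨e, he, hce⟩ := (hG.exists_mul_eq_iff_exists_mul_eq hc).2 ⟨y, hy, hyc⟩
    subst hyc
    convert he using 1
    rw [eq_inv_mul_of_mul_eq hce]
    group

theorem delta_mul_mul_delta_inv_mem (hG : IsGarsideGroup P Δ) {x : G} (hx : x ∈ P) :
    Δ * x * Δ⁻¹ ∈ P := by
  refine hG.induction_on (p := fun x => Δ * x * Δ⁻¹ ∈ P) (by simp [one_mem]) ?_ ?_ hx
  · intro x y _ _ hx hy
    simpa [mul_assoc] using mul_mem hx hy
  · intro y c hy hc hyc
    -- `Δ = c' y = e c'` with `c', e ∈ P`, and `Δ y Δ⁻¹ = e`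
    obtain ⟨c', hc', hc'y⟩ := (hG.exists_mul_eq_iff_exists_mul_eq hy).1 ⟨c, hc, hyc⟩
    obtain ⟨e, he, hec'⟩ := (hG.exists_mul_eq_iff_exists_mul_eq hc').1 ⟨y, hy, hc'y⟩
    subst hc'y
    convert he using 1
    rw [eq_mul_inv_of_mul_eq hec']
    group

theorem zpow_mul_mul_zpow_neg_mem (hG : IsGarsideGroup P Δ) (j : ℤ) {x : G} (hx : x ∈ P) :
    Δ ^ j * x * Δ ^ (-j) ∈ P := by
  induction j using Int.induction_on generalizing x with
  | zero => simpa using hx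
  | succ k ih =>
    convert ih (hG.delta_mul_mul_delta_inv_mem hx) using 1
    group
  | pred k ih =>
    convert ih (hG.delta_inv_mul_mul_delta_mem hx) using 1
    group

theorem gdvdL_mul_zpow (hG : IsGarsideGroup P Δ) (j : ℤ) {x y : G} (h : gdvdL P x y) :
    gdvdL P (x * Δ ^ j) (y * Δ ^ j) := by
  unfold gdvdL
  convert hG.zpow_mul_mul_zpow_neg_mem (-j) h using 1
  group

theorem zpow_gdvdL_zpow (hG : IsGarsideGroup P Δ) {i j : ℤ} (hij : i ≤ j) :
    gdvdL P (Δ ^ i) (Δ ^ j) := by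
  obtain ⟨k, hk⟩ := Int.eq_ofNat_of_zero_le (sub_nonneg.2 hij)
  unfold gdvdL
  rw [← zpow_neg, ← zpow_add, neg_add_eq_sub, hk, zpow_natCast]
  exact pow_mem hG.delta_mem k

theorem mul_gdvdL_zpow_add (hG : IsGarsideGroup P Δ) {x y : G} {s t : ℤ}
    (hx : gdvdL P x (Δ ^ s)) (hy : gdvdL P y (Δ ^ t)) : gdvdL P (x * y) (Δ ^ (s + t)) := by
  rw [zpow_add]
  exact gdvdL_trans ((gdvdL_mul_left_iff x y _).2 hy) (hG.gdvdL_mul_zpow t hx)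

theorem zpow_add_gdvdL_mul (hG : IsGarsideGroup P Δ) {x y : G} {s t : ℤ}
    (hx : gdvdL P (Δ ^ s) x) (hy : gdvdL P (Δ ^ t) y) : gdvdL P (Δ ^ (s + t)) (x * y) := by
  rw [zpow_add]
  exact gdvdL_trans (hG.gdvdL_mul_zpow t hx) ((gdvdL_mul_left_iff x _ y).2 hy)

theorem pow_gdvdL_zpow_mul (hG : IsGarsideGroup P Δ) {x : G} {t : ℤ}
    (h : gdvdL P x (Δ ^ t)) (n : ℕ) : gdvdL P (x ^ n) (Δ ^ (n * t)) := by
  induction n with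
  | zero => simpa using gdvdL_refl P 1
  | succ n ih =>
    rw [pow_succ', Nat.cast_succ, add_comm, one_add_mul]
    exact hG.mul_gdvdL_zpow_add h ih

theorem zpow_mul_gdvdL_pow (hG : IsGarsideGroup P Δ) {x : G} {t : ℤ}
    (h : gdvdL P (Δ ^ t) x) (n : ℕ) : gdvdL P (Δ ^ (n * t)) (x ^ n) := by
  induction n with
  | zero => simpa using gdvdL_refl P 1
  | succ n ih =>
    rw [pow_succ', Nat.cast_succ, add_comm, one_add_mul]
    exact hG.zpow_add_gdvdL_mul h ih

theorem exists_gdvdL_zpow_of_mem (hG : IsGarsideGroup P Δ) {x : G} (hx : x ∈ P) :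
    ∃ k : ℤ, gdvdL P x (Δ ^ k) := by
  refine hG.induction_on (p := fun x => ∃ k : ℤ, gdvdL P x (Δ ^ k))
    ⟨0, by simpa using gdvdL_refl P 1⟩ ?_ ?_ hx
  · rintro x y - - ⟨k, hk⟩ ⟨l, hl⟩
    exact ⟨k + l, hG.mul_gdvdL_zpow_add hk hl⟩
  · rintro y c - hc hyc
    exact ⟨1, by simpa [gdvdL, ← hyc] using hc⟩

theorem exists_zpow_gdvdL (hG : IsGarsideGroup P Δ) (g : G) : ∃ k : ℤ, gdvdL P (Δ ^ k) g := by
  obtain ⟨a, b, rfl⟩ := hG.2.1 g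
  obtain ⟨k, hk⟩ := hG.exists_gdvdL_zpow_of_mem b.2
  have hpos : gdvdL P 1 (a * ((b : G)⁻¹ * Δ ^ k)) := by simpa [gdvdL] using mul_mem a.2 hk
  exact ⟨-k, by simpa [mul_assoc] using hG.gdvdL_mul_zpow (-k) hpos⟩

theorem exists_gdvdL_iff (hG : IsGarsideGroup P Δ) (a b : G) :
    ∃ d, ∀ e, gdvdL P d e ↔ gdvdL P a e ∧ gdvdL P b e := by
  obtain ⟨i, hi⟩ := hG.exists_zpow_gdvdL a
  obtain ⟨j, hj⟩ := hG.exists_zpow_gdvdL b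
  set z := Δ ^ min i j
  have ha : gdvdL P z a := gdvdL_trans (hG.zpow_gdvdL_zpow (min_le_left i j)) hi
  have hb : gdvdL P z b := gdvdL_trans (hG.zpow_gdvdL_zpow (min_le_right i j)) hj
  obtain ⟨⟨-, -, -, -, -, hlcm, -⟩, -⟩ := hG
  -- shifting by `z⁻¹` makes `a` and `b` positive, so their lcm in `P` gives the join
  obtain ⟨d, hda, hdb, hd⟩ := hlcm ⟨_, ha⟩ ⟨_, hb⟩
  have had : gdvdL P a (z * d) := by
    rw [← gdvdL_mul_left_iff z⁻¹, inv_mul_cancel_left]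
    exact (dvdL_mk_iff ha d.2).1 hda
  have hbd : gdvdL P b (z * d) := by
    rw [← gdvdL_mul_left_iff z⁻¹, inv_mul_cancel_left]
    exact (dvdL_mk_iff hb d.2).1 hdb
  refine ⟨z * d, fun e => ⟨fun h => ⟨gdvdL_trans had h, gdvdL_trans hbd h⟩, ?_⟩⟩
  rintro ⟨hae, hbe⟩
  have hze : gdvdL P z e := gdvdL_trans ha hae
  rw [← gdvdL_mul_left_iff z⁻¹, inv_mul_cancel_left]
  refine (dvdL_mk_iff d.2 hze).1 (hd ⟨_, hze⟩ ?_ ?_)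
  · exact (dvdL_mk_iff ha hze).2 ((gdvdL_mul_left_iff _ _ _).2 hae)
  · exact (dvdL_mk_iff hb hze).2 ((gdvdL_mul_left_iff _ _ _).2 hbe)

theorem exists_gdvdL_mul_mul_zpow (hG : IsGarsideGroup P Δ) {a : G} {b : ℤ} {n : ℕ}
    (hn : 0 < n) (h : a ^ n * Δ ^ (n * b) ∈ P) : ∃ c, gdvdL P c (a * c * Δ ^ b) := by
  let _ : Preorder G := gdvdLPreorder P
  have hiter : ∀ i : ℕ, (fun x => a * x * Δ ^ b)^[i] 1 = a ^ i * Δ ^ (i * b) := by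
    intro i
    induction i with
    | zero => simp
    | succ i ih =>
      rw [Function.iterate_succ_apply', ih, pow_succ', Nat.cast_succ, add_one_mul, zpow_add]
      group
  refine Monotone.exists_le_map_of_le_iterate hG.exists_gdvdL_iff (fun x y hxy => ?_) hn
    (x := 1) ?_
  · exact hG.gdvdL_mul_zpow b ((gdvdL_mul_left_iff a x y).2 hxy)
  · show gdvdL P 1 _
    simpa [hiter, gdvdL] using h

theorem exists_isConj_gdvdL_zpow_of_pow (hG : IsGarsideGroup P Δ) {g h : G} {n : ℕ} {t : ℤ}
    (hn : 0 < n) (hgh : IsConj (g ^ n) h) (hh : gdvdL P h (Δ ^ (n * t))) :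
    ∃ k, IsConj g k ∧ gdvdL P k (Δ ^ t) := by
  obtain ⟨x, rfl⟩ := isConj_iff.1 hgh
  rw [← conj_pow] at hh
  obtain ⟨c, hc⟩ := hG.exists_gdvdL_mul_mul_zpow hn (a := (x * g * x⁻¹)⁻¹) (b := t)
    (by rwa [inv_pow])
  refine ⟨c⁻¹ * (x * g * x⁻¹) * c, isConj_iff.2 ⟨c⁻¹ * x, by group⟩, ?_⟩
  unfold gdvdL at hc ⊢
  convert hc using 1
  group

theorem exists_isConj_zpow_gdvdL_of_pow (hG : IsGarsideGroup P Δ) {g h : G} {n : ℕ} {t : ℤ}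
    (hn : 0 < n) (hgh : IsConj (g ^ n) h) (hh : gdvdL P (Δ ^ (n * t)) h) :
    ∃ k, IsConj g k ∧ gdvdL P (Δ ^ t) k := by
  obtain ⟨x, rfl⟩ := isConj_iff.1 hgh
  rw [← conj_pow] at hh
  have hpos : (x * g * x⁻¹) ^ n * Δ ^ (n * -t) ∈ P := by
    convert hG.zpow_mul_mul_zpow_neg_mem (n * t) hh using 1
    group
  obtain ⟨c, hc⟩ := hG.exists_gdvdL_mul_mul_zpow hn hpos
  refine ⟨c⁻¹ * (x * g * x⁻¹) * c, isConj_iff.2 ⟨c⁻¹ * x, by group⟩, ?_⟩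
  unfold gdvdL at hc ⊢
  convert hG.zpow_mul_mul_zpow_neg_mem (-t) hc using 1
  group

end IsGarsideGroup

/-- **Theorem 6.1 (2),(3).** For a Garside group `G`, `g ∈ G` and `n ≥ 1`,
`sup_s(g) - 1 < sup_s(gⁿ)/n ≤ sup_s(g)`, and moreover
`len_s(g) - 2 < len_s(gⁿ)/n ≤ len_s(g)`. -/
theorem sups_lens_pow {G : Type*} [Group G] (P : Submonoid G) (Δ : G)
    (hG : IsGarsideGroup P Δ) (g : G) (n : ℕ) (hn : 1 ≤ n) (s u : ℤ)
    (hs : IsLeast {t : ℤ | ∃ h : G, IsConj g h ∧ gdvdL P h (Δ ^ t)} s)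
    (hu : IsLeast {t : ℤ | ∃ h : G, IsConj (g ^ n) h ∧ gdvdL P h (Δ ^ t)} u) :
    ((n : ℤ) * s - (n : ℤ) < u ∧ u ≤ (n : ℤ) * s) ∧
    (∀ r m : ℤ,
      IsGreatest {t : ℤ | ∃ h : G, IsConj g h ∧ gdvdL P (Δ ^ t) h} r →
      IsGreatest {t : ℤ | ∃ h : G, IsConj (g ^ n) h ∧ gdvdL P (Δ ^ t) h} m →
      (n : ℤ) * ((s - r) - 2) < u - m ∧ u - m ≤ (n : ℤ) * (s - r)) := by
  have hu_le : u ≤ n * s := by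
    obtain ⟨h, hgh, hh⟩ := hs.1
    exact hu.2 ⟨h ^ n, hgh.pow n, hG.pow_gdvdL_zpow_mul hh n⟩
  have hu_gt : n * s - n < u := by
    by_contra! H
    obtain ⟨h, hgh, hh⟩ := hu.1
    have hle : gdvdL P h (Δ ^ (n * (s - 1))) := gdvdL_trans hh (hG.zpow_gdvdL_zpow (by linarith))
    linarith [hs.2 (hG.exists_isConj_gdvdL_zpow_of_pow hn hgh hle)]
  refine ⟨⟨hu_gt, hu_le⟩, fun r m hr hm => ?_⟩
  have hm_ge : n * r ≤ m := by
    obtain ⟨h, hgh, hh⟩ := hr.1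
    exact hm.2 ⟨h ^ n, hgh.pow n, hG.zpow_mul_gdvdL_pow hh n⟩
  have hm_lt : m < n * r + n := by
    by_contra! H
    obtain ⟨h, hgh, hh⟩ := hm.1
    have hge : gdvdL P (Δ ^ (n * (r + 1))) h := gdvdL_trans (hG.zpow_gdvdL_zpow (by linarith)) hh
    linarith [hr.2 (hG.exists_isConj_zpow_gdvdL_of_pow hn hgh hge)]
  constructor <;> linarith
end
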